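/- arXiv:2303.08504 — 6 statements merged into one kernel-verified Lean document; each statement's English description precedes it below -/
import Mathlib

section
/- Let m ≥ 2 be an integer and D a unit of Z_m. Every row and every column of a matrix in G_D lies in V = {(a,b) ∈ Z_m × Z_m : gcd(a,b,m) = 1}, and for every (a,b) ∈ V the number of matrices in G_D whose bottom row equals (a,b) is exactly m; the same count m holds for the top row, the left column and the right column. (Equivalently, if U is uniformly distributed on G_D, then each row and each column of U is uniformly distributed on V.) -/
/-!
`gcd(a, b, m) = 1` says exactly that `(a, b)` is unimodular, `u * a + v * b = 1` for some `u, v`.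
The rows and columns of a matrix of unit determinant are unimodular, since the diagonal entries
of `A * A⁻¹ = 1` and `A⁻¹ * A = 1` are such relations. Once one row `(a, b)` is fixed, the
determinant is, up to sign, the linear form `b * x - a * y` in the other row; as `(a, b)` is
unimodular, the solutions of `b * x - a * y = D` form a line `p₀ + s • (a, b)`, so exactly `m`
matrices have that row. Columns reduce to rows by transposition.
-/
/-- `(a, b) ∈ ℤ/mℤ × ℤ/mℤ` lies in `V`, i.e. `gcd(a, b, m) = 1` (computed with the canonical
integer representatives). -/
def inV (m : ℕ) [NeZero m] (v : ZMod m × ZMod m) : Prop :=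
  Nat.gcd (Nat.gcd v.1.val v.2.val) m = 1

theorem inV_iff_isCoprime {m : ℕ} [NeZero m] (a b : ZMod m) : inV m (a, b) ↔ IsCoprime a b := by
  change Nat.gcd (Nat.gcd a.val b.val) m = 1 ↔ _
  constructor
  · intro h
    -- Bézout twice: for `gcd(a, b)` in terms of `a, b`, and for `1 = gcd(gcd(a, b), m)`
    have hg := congrArg (Int.cast : ℤ → ZMod m) (Nat.gcd_eq_gcd_ab (Nat.gcd a.val b.val) m)
    have hab := congrArg (Int.cast : ℤ → ZMod m) (Nat.gcd_eq_gcd_ab a.val b.val)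
    rw [h] at hg
    push_cast [ZMod.natCast_val, ZMod.cast_id', ZMod.natCast_self] at hg hab
    set c : ZMod m := (((Nat.gcd a.val b.val).gcdA m : ℤ) : ZMod m)
    exact ⟨c * (a.val.gcdA b.val : ℤ), c * (a.val.gcdB b.val : ℤ),
      by linear_combination -c * hab - hg⟩
  · intro h
    set g := Nat.gcd (Nat.gcd a.val b.val) m
    have hgm : g ∣ m := Nat.gcd_dvd_right _ _
    have hvanish : ∀ c : ZMod m, g ∣ c.val → ZMod.castHom hgm (ZMod g) c = 0 := fun c hc => by
      rw [ZMod.castHom_apply, ZMod.cast_eq_val, ZMod.natCast_eq_zero_iff]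
      exact hc
    have hmod_g := h.map (ZMod.castHom hgm (ZMod g))
    rw [hvanish a ((Nat.gcd_dvd_left _ _).trans (Nat.gcd_dvd_left _ _)),
      hvanish b ((Nat.gcd_dvd_left _ _).trans (Nat.gcd_dvd_right _ _)),
      isCoprime_zero_left, isUnit_zero_iff, ← Nat.cast_one, eq_comm,
      ZMod.natCast_eq_zero_iff] at hmod_g
    exact Nat.dvd_one.mp hmod_g

section
variable {R : Type*} [CommRing R]

theorem IsCoprime.card_mul_add_mul_eq {a b : R} (hab : IsCoprime a b) (t : R) :
    Nat.card {p : R × R // a * p.1 + b * p.2 = t} = Nat.card R := by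
  obtain ⟨u, v, huv⟩ := hab
  refine Nat.card_congr
    { toFun := fun p => u * p.1.2 - v * p.1.1
      invFun := fun s => ⟨(t * u - s * b, t * v + s * a), by linear_combination t * huv⟩
      left_inv := fun ⟨p, hp⟩ => Subtype.ext (Prod.ext ?_ ?_)
      right_inv := fun s => ?_ }
  · dsimp only; linear_combination -u * hp + p.1 * huv
  · dsimp only; linear_combination -v * hp + p.2 * huv
  · dsimp only; linear_combination s * huv

theorem Matrix.isCoprime_row_of_isUnit_det {A : Matrix (Fin 2) (Fin 2) R} (hA : IsUnit A.det)
    (i : Fin 2) : IsCoprime (A i 0) (A i 1) := by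
  have h := congrFun (congrFun (A.mul_nonsing_inv hA) i) i
  rw [Matrix.mul_apply, Fin.sum_univ_two, Matrix.one_apply_eq] at h
  exact ⟨A⁻¹ 0 i, A⁻¹ 1 i, by linear_combination h⟩

theorem Matrix.isCoprime_col_of_isUnit_det {A : Matrix (Fin 2) (Fin 2) R} (hA : IsUnit A.det)
    (j : Fin 2) : IsCoprime (A 0 j) (A 1 j) := by
  simpa using isCoprime_row_of_isUnit_det (A := A.transpose) (by rwa [Matrix.det_transpose]) j

theorem Matrix.card_det_eq_and_row_one {a b : R} (hab : IsCoprime a b) (t : R) :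
    Nat.card {A : Matrix (Fin 2) (Fin 2) R // A.det = t ∧ A 1 0 = a ∧ A 1 1 = b} =
      Nat.card R := by
  rw [← (hab.symm.neg_right).card_mul_add_mul_eq t]
  refine Nat.card_congr
    { toFun := fun A => ⟨(A.1 0 0, A.1 0 1), ?_⟩
      invFun := fun p => ⟨!![p.1.1, p.1.2; a, b], ?_⟩
      left_inv := fun A => ?_
      right_inv := fun p => ?_ }
  · obtain ⟨hd, h0, h1⟩ := A.2
    rw [Matrix.det_fin_two, h0, h1] at hd
    linear_combination hd
  · refine ⟨?_, rfl, rfl⟩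
    rw [Matrix.det_fin_two_of]
    linear_combination p.2
  · ext i j
    fin_cases i <;> fin_cases j <;> simp [A.2.2.1, A.2.2.2]
  · rfl

theorem Matrix.card_det_eq_and_row_zero {a b : R} (hab : IsCoprime a b) (t : R) :
    Nat.card {A : Matrix (Fin 2) (Fin 2) R // A.det = t ∧ A 0 0 = a ∧ A 0 1 = b} =
      Nat.card R := by
  rw [← card_det_eq_and_row_one hab (-t)]
  refine Nat.card_congr ((reindex (Equiv.swap 0 1) (Equiv.refl (Fin 2))).subtypeEquiv fun A => ?_)
  simp [det_fin_two, ← neg_eq_iff_eq_neg, mul_comm]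

theorem Matrix.card_det_eq_and_row {a b : R} (hab : IsCoprime a b) (t : R) (i : Fin 2) :
    Nat.card {A : Matrix (Fin 2) (Fin 2) R // A.det = t ∧ A i 0 = a ∧ A i 1 = b} =
      Nat.card R := by
  fin_cases i
  exacts [card_det_eq_and_row_zero hab t, card_det_eq_and_row_one hab t]

theorem Matrix.card_det_eq_and_col {a b : R} (hab : IsCoprime a b) (t : R) (j : Fin 2) :
    Nat.card {A : Matrix (Fin 2) (Fin 2) R // A.det = t ∧ A 0 j = a ∧ A 1 j = b} =
      Nat.card R := by
  rw [← card_det_eq_and_row hab t j]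
  exact Nat.card_congr ((transposeAddEquiv _ _ R).toEquiv.subtypeEquiv fun A => by simp)
end

theorem stmt_2_general (m : ℕ) [NeZero m] (D : (ZMod m)ˣ) :
    (∀ A : Matrix (Fin 2) (Fin 2) (ZMod m), A.det = (D : ZMod m) →
      (∀ i : Fin 2, inV m (A i 0, A i 1)) ∧ (∀ j : Fin 2, inV m (A 0 j, A 1 j))) ∧
    (∀ a b : ZMod m, inV m (a, b) →
      (∀ i : Fin 2,
        Nat.card {A : Matrix (Fin 2) (Fin 2) (ZMod m) //
          A.det = (D : ZMod m) ∧ A i 0 = a ∧ A i 1 = b} = m) ∧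
      (∀ j : Fin 2,
        Nat.card {A : Matrix (Fin 2) (Fin 2) (ZMod m) //
          A.det = (D : ZMod m) ∧ A 0 j = a ∧ A 1 j = b} = m)) := by
  refine ⟨fun A hA => ?_, fun a b hab => ?_⟩
  · have hdet : IsUnit A.det := hA ▸ D.isUnit
    exact ⟨fun i => (inV_iff_isCoprime _ _).2 (A.isCoprime_row_of_isUnit_det hdet i),
      fun j => (inV_iff_isCoprime _ _).2 (A.isCoprime_col_of_isUnit_det hdet j)⟩
  · rw [inV_iff_isCoprime] at hab
    exact ⟨fun i => (Matrix.card_det_eq_and_row hab _ i).trans (Nat.card_zmod m),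
      fun j => (Matrix.card_det_eq_and_col hab _ j).trans (Nat.card_zmod m)⟩

/-- Let `m ≥ 2` and let `D` be a unit of `ℤ/mℤ`. Every row and every column of
a matrix in `G_D` lies in `V = {(a,b) : gcd(a,b,m) = 1}`, and for every `(a,b) ∈ V` and each of
the two rows (resp. each of the two columns), the number of matrices in `G_D` with that row
(resp. column) equal to `(a,b)` is exactly `m`. -/
theorem stmt_2 (m : ℕ) [NeZero m] (hm : 2 ≤ m) (D : (ZMod m)ˣ) :
    (∀ A : Matrix (Fin 2) (Fin 2) (ZMod m), A.det = (D : ZMod m) →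
      (∀ i : Fin 2, inV m (A i 0, A i 1)) ∧ (∀ j : Fin 2, inV m (A 0 j, A 1 j))) ∧
    (∀ a b : ZMod m, inV m (a, b) →
      (∀ i : Fin 2,
        Nat.card {A : Matrix (Fin 2) (Fin 2) (ZMod m) //
          A.det = (D : ZMod m) ∧ A i 0 = a ∧ A i 1 = b} = m) ∧
      (∀ j : Fin 2,
        Nat.card {A : Matrix (Fin 2) (Fin 2) (ZMod m) //
          A.det = (D : ZMod m) ∧ A 0 j = a ∧ A 1 j = b} = m)) :=
  stmt_2_general m D
end

section
/- Let m ≥ 2 be an integer, D a unit of Z_m, and fix one of the four entry positions of a 2×2 matrix. For every a ∈ Z_m, the number of matrices in G_D whose entry in that position equals a is m² ∏_{p | gcd(a,m)} (1 − 1/p), where the product is over the prime divisors of gcd(a,m). Equivalently, if U is uniformly distributed on G_D, then each of the four entries of U has distribution ν on Z_m, where ν_a = (∏_{p | gcd(a,m)} (1 − 1/p)) / (m ∏_{p | m} (1 − 1/p²)). -/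
/-- The probability measure `ν` on `ℤ/mℤ`:
`ν_a = (∏_{p ∣ gcd(a,m)} (1 - 1/p)) / (m ∏_{p ∣ m} (1 - 1/p²))`, products over prime divisors. -/
noncomputable def nuPMF (m : ℕ) [NeZero m] (a : ZMod m) : ℝ :=
  (∏ p ∈ (Nat.gcd a.val m).primeFactors, (1 - 1 / (p : ℝ))) /
    ((m : ℝ) * ∏ p ∈ m.primeFactors, (1 - 1 / (p : ℝ) ^ 2))

-- L0: count of a : ZMod m with k ∣ a.val
lemma card_val_dvd (m k : ℕ) [NeZero m] (hk : k ∣ m) :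
    (Finset.univ.filter fun a : ZMod m => k ∣ a.val).card = m / k := by
  have hm : m ≠ 0 := NeZero.ne m
  have hk0 : k ≠ 0 := fun h => hm (by simpa [h] using hk)
  rw [← Finset.card_range (m / k)]
  symm
  apply Finset.card_bij (fun t _ => ((k * t : ℕ) : ZMod m))
  · intro t ht
    have htlt : k * t < m := by
      rcases hk with ⟨c, rfl⟩
      have := Finset.mem_range.mp ht
      rw [Nat.mul_div_cancel_left c (Nat.pos_of_ne_zero hk0)] at this
      exact (Nat.mul_lt_mul_left (Nat.pos_of_ne_zero hk0)).mpr this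
    simp only [Finset.mem_filter, Finset.mem_univ, true_and]
    rw [ZMod.val_cast_of_lt htlt]
    exact ⟨t, rfl⟩
  · intro t1 h1 t2 h2 heq
    have l1 : k * t1 < m := by
      rcases hk with ⟨c, rfl⟩
      exact (Nat.mul_lt_mul_left (Nat.pos_of_ne_zero hk0)).mpr
        (by rw [← Nat.mul_div_cancel_left c (Nat.pos_of_ne_zero hk0)]; exact Finset.mem_range.mp h1)
    have l2 : k * t2 < m := by
      rcases hk with ⟨c, rfl⟩
      exact (Nat.mul_lt_mul_left (Nat.pos_of_ne_zero hk0)).mpr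
        (by rw [← Nat.mul_div_cancel_left c (Nat.pos_of_ne_zero hk0)]; exact Finset.mem_range.mp h2)
    have := congrArg ZMod.val heq
    rw [ZMod.val_cast_of_lt l1, ZMod.val_cast_of_lt l2] at this
    exact Nat.eq_of_mul_eq_mul_left (Nat.pos_of_ne_zero hk0) this
  · intro a ha
    obtain ⟨-, t, ht⟩ := Finset.mem_filter.mp ha
    refine ⟨t, Finset.mem_range.mpr ?_, ?_⟩
    · have : k * t < m := ht ▸ ZMod.val_lt a
      rcases hk with ⟨c, rfl⟩
      rw [Nat.mul_div_cancel_left c (Nat.pos_of_ne_zero hk0)]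
      exact lt_of_mul_lt_mul_left this (Nat.zero_le k)
    · rw [← ht, ZMod.natCast_zmod_val]

section Fibers
variable {m : ℕ} [NeZero m] (a : ZMod m)

local notation "g" => Nat.gcd (ZMod.val a) m

lemma mul_eq_zero_iff (d : ZMod m) : a * d = 0 ↔ (m / g) ∣ d.val := by
  have hm : m ≠ 0 := NeZero.ne m
  have hgpos : 0 < g := Nat.gcd_pos_of_pos_right _ (Nat.pos_of_ne_zero hm)
  have h1 : a * d = ((a.val * d.val : ℕ) : ZMod m) := by
    push_cast [ZMod.natCast_zmod_val]; ring
  rw [h1, ZMod.natCast_eq_zero_iff]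
  have hmm : m = g * (m / g) := (Nat.mul_div_cancel' (Nat.gcd_dvd_right _ _)).symm
  have haa : a.val = g * (a.val / g) := (Nat.mul_div_cancel' (Nat.gcd_dvd_left _ _)).symm
  constructor
  · intro h
    have h' : g * (m / g) ∣ g * ((a.val / g) * d.val) := by
      rw [← mul_assoc, ← haa, ← hmm]; exact h
    have h2 : (m / g) ∣ (a.val / g) * d.val :=
      (mul_dvd_mul_iff_left (a := g) (Nat.pos_iff_ne_zero.mp hgpos)).mp h'
    have hco : Nat.Coprime (m / g) (a.val / g) :=
      (Nat.coprime_div_gcd_div_gcd hgpos).symm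
    exact hco.dvd_of_dvd_mul_left h2
  · rintro ⟨e, he⟩
    refine ⟨(a.val / g) * e, ?_⟩
    calc a.val * d.val = (g * (a.val / g)) * ((m / g) * e) := by rw [← haa, ← he]
      _ = (g * (m / g)) * ((a.val / g) * e) := by ring
      _ = m * ((a.val / g) * e) := by rw [← hmm]

lemma card_mul_eq_zero : (Finset.univ.filter fun d : ZMod m => a * d = 0).card = g := by
  have hm : m ≠ 0 := NeZero.ne m
  have : (Finset.univ.filter fun d : ZMod m => a * d = 0)
      = (Finset.univ.filter fun d : ZMod m => (m / g) ∣ d.val) := by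
    apply Finset.filter_congr; intro d _; simp [mul_eq_zero_iff a d]
  rw [this, card_val_dvd m (m / g) (Nat.div_dvd_of_dvd (Nat.gcd_dvd_right _ _)),
    Nat.div_div_self (Nat.gcd_dvd_right _ _) hm]

lemma card_mul_eq_of_exists {t : ZMod m} (h : ∃ d₀, a * d₀ = t) :
    (Finset.univ.filter fun d : ZMod m => a * d = t).card = g := by
  obtain ⟨d₀, hd₀⟩ := h
  rw [← card_mul_eq_zero a]
  apply Finset.card_bij' (fun d _ => d - d₀) (fun d _ => d + d₀)
  · intro d hd
    simp only [Finset.mem_filter, Finset.mem_univ, true_and] at hd ⊢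
    rw [mul_sub, hd, hd₀, sub_self]
  · intro d hd
    simp only [Finset.mem_filter, Finset.mem_univ, true_and] at hd ⊢
    rw [mul_add, hd, hd₀, zero_add]
  · intros; ring
  · intros; ring

lemma exists_mul_eq_iff (t : ZMod m) : (∃ d, a * d = t) ↔ g ∣ t.val := by
  have hm : m ≠ 0 := NeZero.ne m
  have hgpos : 0 < g := Nat.gcd_pos_of_pos_right _ (Nat.pos_of_ne_zero hm)
  constructor
  · rintro ⟨d, rfl⟩
    rw [ZMod.val_mul, Nat.dvd_mod_iff (Nat.gcd_dvd_right _ _)]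
    exact Dvd.dvd.mul_right (Nat.gcd_dvd_left _ _) _
  · intro ht
    -- counting argument
    by_contra hns
    push_neg at hns
    set R : Finset (ZMod m) := Finset.univ.image (a * ·) with hR
    set S : Finset (ZMod m) := Finset.univ.filter (fun x => g ∣ x.val) with hS
    have hRS : R ⊆ S := by
      intro x hx
      obtain ⟨d, -, rfl⟩ := Finset.mem_image.mp hx
      rw [hS, Finset.mem_filter]
      refine ⟨Finset.mem_univ _, ?_⟩
      rw [ZMod.val_mul, Nat.dvd_mod_iff (Nat.gcd_dvd_right _ _)]
      exact Dvd.dvd.mul_right (Nat.gcd_dvd_left _ _) _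
    have hcardS : S.card = m / g := card_val_dvd m _ (Nat.gcd_dvd_right _ _)
    have hcardR : R.card * g = m := by
      have h1 : (Finset.univ : Finset (ZMod m)).card
          = ∑ t ∈ R, (Finset.univ.filter fun d : ZMod m => a * d = t).card := by
        apply Finset.card_eq_sum_card_fiberwise
        intro d _
        exact Finset.mem_image.mpr ⟨d, Finset.mem_univ d, rfl⟩
      have h2 : ∀ t ∈ R, (Finset.univ.filter fun d : ZMod m => a * d = t).card = g := by
        intro t htR
        obtain ⟨d, -, rfl⟩ := Finset.mem_image.mp htR
        exact card_mul_eq_of_exists a ⟨d, rfl⟩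
      rw [Finset.sum_congr rfl h2, Finset.sum_const, smul_eq_mul] at h1
      rw [← h1]
      simp [ZMod.card m]
    have hcardR' : R.card = m / g := (Nat.div_eq_of_eq_mul_left hgpos (by omega)).symm
    have hRfull : R = S := by
      apply Finset.eq_of_subset_of_card_le hRS
      rw [hcardS, hcardR']
    have : t ∈ R := hRfull ▸ (by rw [hS]; exact Finset.mem_filter.mpr ⟨Finset.mem_univ _, ht⟩)
    obtain ⟨d, -, hd⟩ := Finset.mem_image.mp this
    exact hns d hd

end Fibers

section Pairs
variable {m : ℕ} [NeZero m] (a : ZMod m)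

local notation "g" => Nat.gcd (ZMod.val a) m

lemma card_mul_eq (t : ZMod m) :
    (Finset.univ.filter fun d : ZMod m => a * d = t).card
      = if g ∣ t.val then g else 0 := by
  by_cases h : g ∣ t.val
  · rw [if_pos h]
    exact card_mul_eq_of_exists a ((exists_mul_eq_iff a t).mpr h)
  · rw [if_neg h]
    rw [Finset.card_eq_zero, Finset.filter_eq_empty_iff]
    intro d _
    exact fun hd => h ((exists_mul_eq_iff a t).mp ⟨d, hd⟩)

-- fibers of the cast hom ZMod m → ZMod n for n ∣ m all have size m / n
lemma card_cast_fiber {n : ℕ} [NeZero n] (hn : n ∣ m) (y : ZMod n) :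
    (Finset.univ.filter fun x : ZMod m => ZMod.castHom hn (ZMod n) x = y).card = m / n := by
  have key : (Finset.univ.filter fun x : ZMod m => ZMod.castHom hn (ZMod n) x = 0).card
      = m / n := by
    have : ∀ x : ZMod m, ZMod.castHom hn (ZMod n) x = 0 ↔ n ∣ x.val := by
      intro x
      rw [ZMod.castHom_apply, ← ZMod.natCast_val, ZMod.natCast_eq_zero_iff]
    rw [Finset.filter_congr (fun x _ => by rw [this x])]
    exact card_val_dvd m n hn
  have hx₀ : ZMod.castHom hn (ZMod n) ((y.val : ℕ) : ZMod m) = y := by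
    rw [map_natCast, ZMod.natCast_zmod_val]
  rw [← key]
  apply Finset.card_bij' (fun x _ => x - ((y.val : ℕ) : ZMod m))
    (fun x _ => x + ((y.val : ℕ) : ZMod m))
  · intro x hx
    simp only [Finset.mem_filter, Finset.mem_univ, true_and] at hx ⊢
    rw [map_sub, hx, hx₀, sub_self]
  · intro x hx
    simp only [Finset.mem_filter, Finset.mem_univ, true_and] at hx ⊢
    rw [map_add, hx, hx₀, zero_add]
  · intros; ring
  · intros; ring

-- number of pairs in (ZMod n)² with product a given unit is totient n
lemma card_pairs_unit {n : ℕ} [NeZero n] (w : (ZMod n)ˣ) :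
    (Finset.univ.filter fun y : ZMod n × ZMod n => y.1 * y.2 = (w : ZMod n)).card
      = Nat.totient n := by
  rw [← ZMod.card_units_eq_totient n, ← Finset.card_univ]
  symm
  apply Finset.card_bij (fun (x : (ZMod n)ˣ) _ => ((x : ZMod n), ((x⁻¹ * w : (ZMod n)ˣ) : ZMod n)))
  · intro x _
    simp only [Finset.mem_filter, Finset.mem_univ, true_and]
    push_cast
    rw [← mul_assoc, Units.mul_inv, one_mul]
  · intro x _ y _ heq
    have h1 := congrArg Prod.fst heq
    exact Units.ext h1
  · intro y hy
    simp only [Finset.mem_filter, Finset.mem_univ, true_and] at hy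
    have hu : IsUnit y.1 := isUnit_of_mul_isUnit_left (hy ▸ w.isUnit)
    obtain ⟨x, hx⟩ := hu
    refine ⟨x, Finset.mem_univ _, ?_⟩
    have h2 : ((x⁻¹ * w : (ZMod n)ˣ) : ZMod n) = y.2 := by
      have hxy : (x : ZMod n) * y.2 = (w : ZMod n) := by rw [hx]; exact hy
      calc ((x⁻¹ * w : (ZMod n)ˣ) : ZMod n)
          = ((x⁻¹ : (ZMod n)ˣ) : ZMod n) * ((x : ZMod n) * y.2) := by
            rw [hxy]; push_cast; ring
        _ = (((x⁻¹ * x : (ZMod n)ˣ)) : ZMod n) * y.2 := by push_cast; ring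
        _ = y.2 := by rw [inv_mul_cancel]; simp
    exact Prod.ext hx h2

end Pairs

section Count00
variable {m : ℕ} [NeZero m]

lemma card_pairs (u : (ZMod m)ˣ) (a : ZMod m) :
    (Finset.univ.filter fun bc : ZMod m × ZMod m =>
        Nat.gcd a.val m ∣ ((u : ZMod m) + bc.1 * bc.2).val).card
      = (m / Nat.gcd a.val m) ^ 2 * Nat.totient (Nat.gcd a.val m) := by
  set G := Nat.gcd a.val m with hG
  have hm : m ≠ 0 := NeZero.ne m
  have hGpos : 0 < G := Nat.gcd_pos_of_pos_right _ (Nat.pos_of_ne_zero hm)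
  haveI : NeZero G := ⟨Nat.pos_iff_ne_zero.mp hGpos⟩
  have hg : G ∣ m := Nat.gcd_dvd_right _ _
  set π := ZMod.castHom hg (ZMod G) with hπ
  have hdvd_iff : ∀ x : ZMod m, G ∣ x.val ↔ π x = 0 := by
    intro x
    rw [hπ, ZMod.castHom_apply, ← ZMod.natCast_val, ZMod.natCast_eq_zero_iff]
  set w : (ZMod G)ˣ := Units.map (π : ZMod m →* ZMod G) u with hw
  have hcond : ∀ bc : ZMod m × ZMod m,
      (G ∣ ((u : ZMod m) + bc.1 * bc.2).val) ↔ π bc.1 * π bc.2 = ((-w : (ZMod G)ˣ) : ZMod G) := by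
    intro bc
    rw [hdvd_iff, map_add, map_mul]
    have hwv : ((w : (ZMod G)ˣ) : ZMod G) = π u := rfl
    rw [Units.val_neg, hwv]
    constructor
    · intro h; linear_combination h
    · intro h; linear_combination h
  rw [Finset.filter_congr (fun bc _ => hcond bc)]
  rw [Finset.card_eq_sum_card_fiberwise
    (f := fun bc : ZMod m × ZMod m => (π bc.1, π bc.2))
    (t := Finset.univ.filter fun y : ZMod G × ZMod G => y.1 * y.2 = ((-w : (ZMod G)ˣ) : ZMod G))
    (fun bc hbc => by
      simp only [Finset.mem_coe, Finset.mem_filter, Finset.mem_univ, true_and] at hbc ⊢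
      exact hbc)]
  have hfib : ∀ y ∈ (Finset.univ.filter fun y : ZMod G × ZMod G =>
      y.1 * y.2 = ((-w : (ZMod G)ˣ) : ZMod G)),
      ((Finset.univ.filter fun bc : ZMod m × ZMod m =>
          π bc.1 * π bc.2 = ((-w : (ZMod G)ˣ) : ZMod G)).filter
        fun bc => (π bc.1, π bc.2) = y).card = (m / G) ^ 2 := by
    intro y hy
    simp only [Finset.mem_filter, Finset.mem_univ, true_and] at hy
    have : ((Finset.univ.filter fun bc : ZMod m × ZMod m =>
          π bc.1 * π bc.2 = ((-w : (ZMod G)ˣ) : ZMod G)).filter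
        fun bc => (π bc.1, π bc.2) = y)
        = Finset.univ.filter fun bc : ZMod m × ZMod m => π bc.1 = y.1 ∧ π bc.2 = y.2 := by
      rw [Finset.filter_filter]
      apply Finset.filter_congr
      intro bc _
      constructor
      · rintro ⟨-, h2⟩
        exact ⟨congrArg Prod.fst h2, congrArg Prod.snd h2⟩
      · rintro ⟨h1, h2⟩
        refine ⟨by rw [h1, h2]; exact hy, by rw [h1, h2]⟩
    rw [this]
    have : (Finset.univ.filter fun bc : ZMod m × ZMod m => π bc.1 = y.1 ∧ π bc.2 = y.2)
        = (Finset.univ.filter fun b : ZMod m => π b = y.1) ×ˢ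
          (Finset.univ.filter fun c : ZMod m => π c = y.2) := by
      rw [← Finset.filter_product, Finset.univ_product_univ]
    rw [this, Finset.card_product, card_cast_fiber hg y.1, card_cast_fiber hg y.2, sq]
  rw [Finset.sum_congr rfl hfib, Finset.sum_const, card_pairs_unit (-w), smul_eq_mul, mul_comm]

lemma count00 (u : (ZMod m)ˣ) (a : ZMod m) :
    Nat.card {A : Matrix (Fin 2) (Fin 2) (ZMod m) // A.det = (u : ZMod m) ∧ A 0 0 = a}
      = Nat.gcd a.val m *
        ((m / Nat.gcd a.val m) ^ 2 * Nat.totient (Nat.gcd a.val m)) := by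
  set G := Nat.gcd a.val m with hG
  have E : {A : Matrix (Fin 2) (Fin 2) (ZMod m) // A.det = (u : ZMod m) ∧ A 0 0 = a}
      ≃ {x : (ZMod m × ZMod m) × ZMod m // a * x.2 = (u : ZMod m) + x.1.1 * x.1.2} := by
    refine ⟨fun A => ⟨((A.1 0 1, A.1 1 0), A.1 1 1), ?_⟩,
      fun x => ⟨!![a, x.1.1.1; x.1.1.2, x.1.2], ?_, ?_⟩, ?_, ?_⟩
    · obtain ⟨A, hdet, hA⟩ := A
      rw [Matrix.det_fin_two] at hdet
      simp only
      linear_combination hdet - A 1 1 * hA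
    · rw [Matrix.det_fin_two_of]
      linear_combination x.2
    · simp
    · rintro ⟨A, hdet, hA⟩
      apply Subtype.ext
      simp only
      rw [← hA]
      exact (Matrix.eta_fin_two A).symm
    · intro x
      apply Subtype.ext
      simp
  rw [Nat.card_congr (E.trans (Equiv.subtypeProdEquivSigmaSubtype
    (fun bc : ZMod m × ZMod m => fun d : ZMod m => a * d = (u : ZMod m) + bc.1 * bc.2)))]
  rw [Nat.card_eq_fintype_card, Fintype.card_sigma]
  have : ∀ bc : ZMod m × ZMod m,
      Fintype.card {d : ZMod m // a * d = (u : ZMod m) + bc.1 * bc.2}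
        = if G ∣ ((u : ZMod m) + bc.1 * bc.2).val then G else 0 := by
    intro bc
    rw [Fintype.card_subtype]
    exact card_mul_eq a _
  rw [Finset.sum_congr rfl (fun bc _ => this bc), ← Finset.sum_filter,
    Finset.sum_const, card_pairs u a, smul_eq_mul, mul_comm]

end Count00

def mshift {R : Type*} (i j : Fin 2) (A : Matrix (Fin 2) (Fin 2) R) :
    Matrix (Fin 2) (Fin 2) R := fun r s => A (r + i) (s + j)

lemma mshift_mshift {R : Type*} (i j : Fin 2) (A : Matrix (Fin 2) (Fin 2) R) :
    mshift i j (mshift i j A) = A := by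
  funext r s
  have hi : i + i = 0 := by fin_cases i <;> decide
  have hj : j + j = 0 := by fin_cases j <;> decide
  simp [mshift, add_assoc, hi, hj]

lemma mshift_00 {R : Type*} (i j : Fin 2) (A : Matrix (Fin 2) (Fin 2) R) :
    mshift i j A 0 0 = A i j := by simp [mshift]

lemma mshift_det {R : Type*} [CommRing R] (i j : Fin 2) (A : Matrix (Fin 2) (Fin 2) R) :
    (mshift i j A).det = if i = j then A.det else -A.det := by
  rw [Matrix.det_fin_two, Matrix.det_fin_two]
  fin_cases i <;> fin_cases j <;> simp [mshift] <;> ring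

lemma countij {m : ℕ} [NeZero m] (D : (ZMod m)ˣ) (i j : Fin 2) (a : ZMod m) :
    Nat.card {A : Matrix (Fin 2) (Fin 2) (ZMod m) // A.det = (D : ZMod m) ∧ A i j = a}
      = Nat.card {A : Matrix (Fin 2) (Fin 2) (ZMod m) //
          A.det = ((if i = j then D else -D : (ZMod m)ˣ) : ZMod m) ∧ A 0 0 = a} := by
  set u : (ZMod m)ˣ := if i = j then D else -D with hu
  have hi : i + i = 0 := by fin_cases i <;> decide
  have hj : j + j = 0 := by fin_cases j <;> decide
  have huv : (u : ZMod m) = if i = j then (D : ZMod m) else -(D : ZMod m) := by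
    rw [hu]; split_ifs <;> simp
  apply Nat.card_congr
  refine ⟨fun A => ⟨mshift i j A.1, ?_, ?_⟩, fun B => ⟨mshift i j B.1, ?_, ?_⟩, ?_, ?_⟩
  · rw [mshift_det, A.2.1, huv]
  · rw [mshift_00]; exact A.2.2
  · rw [mshift_det, B.2.1, huv]
    split_ifs <;> simp
  · show B.1 (i + i) (j + j) = a
    rw [hi, hj]; exact B.2.2
  · intro A; exact Subtype.ext (mshift_mshift i j A.1)
  · intro B; exact Subtype.ext (mshift_mshift i j B.1)

lemma tot_real (n : ℕ) :
    (Nat.totient n : ℝ) = n * ∏ p ∈ n.primeFactors, (1 - 1 / (p : ℝ)) := by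
  have h := Nat.totient_eq_mul_prod_factors n
  have h2 := congrArg (fun q : ℚ => (q : ℝ)) h
  push_cast at h2
  simpa [one_div] using h2

lemma count_real {m : ℕ} [NeZero m] (D : (ZMod m)ˣ) (i j : Fin 2) (a : ZMod m) :
    (Nat.card {A : Matrix (Fin 2) (Fin 2) (ZMod m) //
        A.det = (D : ZMod m) ∧ A i j = a} : ℝ)
      = (m : ℝ) ^ 2 * ∏ p ∈ (Nat.gcd a.val m).primeFactors, (1 - 1 / (p : ℝ)) := by
  rw [countij D i j a, count00]
  set G := Nat.gcd a.val m with hG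
  have hm : m ≠ 0 := NeZero.ne m
  have hg : G ∣ m := Nat.gcd_dvd_right _ _
  have hG0 : G ≠ 0 := Nat.pos_iff_ne_zero.mp (Nat.gcd_pos_of_pos_right _ (Nat.pos_of_ne_zero hm))
  have hGr : (G : ℝ) ≠ 0 := Nat.cast_ne_zero.mpr hG0
  push_cast [Nat.cast_div hg hGr, tot_real G]
  field_simp


lemma gcd_primeFactors_eq (m : ℕ) (hm : m ≠ 0) (x : ℕ) :
    (Nat.gcd x m).primeFactors = m.primeFactors.filter (· ∣ x) := by
  ext p
  simp only [Nat.mem_primeFactors, Finset.mem_filter, Nat.dvd_gcd_iff]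
  constructor
  · rintro ⟨hp, ⟨hx, hm'⟩, -⟩
    exact ⟨⟨hp, hm', hm⟩, hx⟩
  · rintro ⟨⟨hp, hm', -⟩, hx⟩
    exact ⟨hp, ⟨hx, hm'⟩, fun h => hm (Nat.eq_zero_of_gcd_eq_zero_right h)⟩

lemma sum_prod_identity (m : ℕ) [NeZero m] :
    ∑ a : ZMod m, ∏ p ∈ (Nat.gcd a.val m).primeFactors, (1 - 1 / (p : ℝ))
      = m * ∏ p ∈ m.primeFactors, (1 - 1 / (p : ℝ) ^ 2) := by
  have hm : m ≠ 0 := NeZero.ne m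
  set P := m.primeFactors with hP
  have hprimes : ∀ p ∈ P, Nat.Prime p := fun p hp => Nat.prime_of_mem_primeFactors hp
  -- expand LHS
  have stepA : ∀ a : ZMod m,
      ∏ p ∈ (Nat.gcd a.val m).primeFactors, (1 - 1 / (p : ℝ))
        = ∑ t ∈ P.powerset, ∏ p ∈ t, (if p ∣ a.val then -(1 / (p : ℝ)) else 0) := by
    intro a
    rw [gcd_primeFactors_eq m hm a.val, Finset.prod_filter]
    have : ∀ p ∈ P, (if p ∣ a.val then (1 - 1 / (p : ℝ)) else 1)
        = (if p ∣ a.val then -(1 / (p : ℝ)) else 0) + 1 := by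
      intro p _; split_ifs <;> ring
    rw [Finset.prod_congr rfl this, Finset.prod_add]
    simp
  have stepC : ∀ (a : ZMod m) (t : Finset ℕ), t ∈ P.powerset →
      ∏ p ∈ t, (if p ∣ a.val then -(1 / (p : ℝ)) else 0)
        = if (∏ p ∈ t, p) ∣ a.val then ∏ p ∈ t, -(1 / (p : ℝ)) else 0 := by
    intro a t ht
    have htP := Finset.mem_powerset.mp ht
    by_cases h : ∀ p ∈ t, p ∣ a.val
    · rw [if_pos (Finset.prod_primes_dvd a.val
        (fun p hp => (hprimes p (htP hp)).prime) h)]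
      exact Finset.prod_congr rfl fun p hp => if_pos (h p hp)
    · push_neg at h
      obtain ⟨p, hpt, hpa⟩ := h
      rw [if_neg (fun hd => hpa ((Finset.dvd_prod_of_mem _ hpt).trans hd)),
        Finset.prod_eq_zero hpt (show (if p ∣ a.val then -(1/(p:ℝ)) else 0) = 0 from if_neg hpa)]
  calc ∑ a : ZMod m, ∏ p ∈ (Nat.gcd a.val m).primeFactors, (1 - 1 / (p : ℝ))
      = ∑ t ∈ P.powerset, ∑ a : ZMod m,
          (if (∏ p ∈ t, p) ∣ a.val then ∏ p ∈ t, -(1 / (p : ℝ)) else 0) := by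
        rw [Finset.sum_congr rfl (fun a _ => (stepA a).trans
          (Finset.sum_congr rfl (fun t ht => stepC a t ht)))]
        exact Finset.sum_comm
    _ = ∑ t ∈ P.powerset, ((m / ∏ p ∈ t, p : ℕ) : ℝ) * ∏ p ∈ t, -(1 / (p : ℝ)) := by
        refine Finset.sum_congr rfl fun t ht => ?_
        rw [← Finset.sum_filter, Finset.sum_const, nsmul_eq_mul,
          card_val_dvd m _ (Finset.prod_primes_dvd m
            (fun p hp => (hprimes p (Finset.mem_powerset.mp ht hp)).prime)
            (fun p hp => Nat.dvd_of_mem_primeFactors (Finset.mem_powerset.mp ht hp)))]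
    _ = ∑ t ∈ P.powerset, (m : ℝ) * ∏ p ∈ t, -(1 / (p : ℝ) ^ 2) := by
        refine Finset.sum_congr rfl fun t ht => ?_
        have htP := Finset.mem_powerset.mp ht
        have hK : (∏ p ∈ t, p) ∣ m := Finset.prod_primes_dvd m
          (fun p hp => (hprimes p (htP hp)).prime)
          (fun p hp => Nat.dvd_of_mem_primeFactors (htP hp))
        have hK0 : ((∏ p ∈ t, p : ℕ) : ℝ) ≠ 0 := by
          rw [Nat.cast_ne_zero]
          exact Finset.prod_ne_zero_iff.mpr fun p hp => (hprimes p (htP hp)).ne_zero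
        rw [Nat.cast_div hK hK0]
        have : ∀ p ∈ t, -(1 / (p : ℝ) ^ 2) = (-(1 / (p : ℝ))) * (1 / (p : ℝ)) := by
          intro p _; ring
        rw [Finset.prod_congr rfl this, Finset.prod_mul_distrib, Finset.prod_div_distrib]
        simp only [Finset.prod_const_one]
        rw [Nat.cast_prod]
        field_simp
    _ = m * ∏ p ∈ m.primeFactors, (1 - 1 / (p : ℝ) ^ 2) := by
        rw [← Finset.mul_sum]
        congr 1
        have : ∀ p ∈ P, (1 - 1 / (p : ℝ) ^ 2) = (-(1 / (p : ℝ) ^ 2)) + 1 := by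
          intro p _; ring
        rw [Finset.prod_congr rfl this, Finset.prod_add]
        simp

/-- Let `m ≥ 2`, `D` a unit of `ℤ/mℤ`, and fix an entry position `(i, j)`.
For every `a ∈ ℤ/mℤ`, the number of matrices in `G_D` whose `(i,j)` entry equals `a` is
`m² ∏_{p ∣ gcd(a,m)} (1 - 1/p)`; equivalently, the `(i,j)` entry of a uniform random element of
`G_D` has distribution `ν`. -/
theorem stmt_3 (m : ℕ) [NeZero m] (hm : 2 ≤ m) (D : (ZMod m)ˣ) (i j : Fin 2) (a : ZMod m) :
    (Nat.card {A : Matrix (Fin 2) (Fin 2) (ZMod m) //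
        A.det = (D : ZMod m) ∧ A i j = a} : ℝ)
      = (m : ℝ) ^ 2 * ∏ p ∈ (Nat.gcd a.val m).primeFactors, (1 - 1 / (p : ℝ)) ∧
    (Nat.card {A : Matrix (Fin 2) (Fin 2) (ZMod m) //
        A.det = (D : ZMod m) ∧ A i j = a} : ℝ)
      / (Nat.card {A : Matrix (Fin 2) (Fin 2) (ZMod m) // A.det = (D : ZMod m)} : ℝ)
      = nuPMF m a := by
  have hm0 : (m : ℝ) ≠ 0 := Nat.cast_ne_zero.mpr (NeZero.ne m)
  have hprod : 0 < ∏ p ∈ m.primeFactors, (1 - 1 / (p : ℝ) ^ 2) := by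
    apply Finset.prod_pos
    intro p hp
    have h2 : 2 ≤ p := (Nat.prime_of_mem_primeFactors hp).two_le
    have h2r : (2 : ℝ) ≤ (p : ℝ) := by exact_mod_cast h2
    have hpos : (0 : ℝ) < (p : ℝ) ^ 2 := by positivity
    rw [sub_pos, div_lt_one hpos]
    nlinarith
  have h1 : Nat.card {A : Matrix (Fin 2) (Fin 2) (ZMod m) // A.det = (D : ZMod m)}
      = ∑ b : ZMod m, Nat.card {A : Matrix (Fin 2) (Fin 2) (ZMod m) //
          A.det = (D : ZMod m) ∧ A i j = b} := by
    rw [Nat.card_eq_fintype_card, Fintype.card_subtype]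
    rw [Finset.card_eq_sum_card_fiberwise (f := fun A : Matrix (Fin 2) (Fin 2) (ZMod m) => A i j)
      (t := Finset.univ) (fun x _ => Finset.mem_univ _)]
    refine Finset.sum_congr rfl fun b _ => ?_
    rw [Nat.card_eq_fintype_card, Fintype.card_subtype, Finset.filter_filter]
  have h2 : (Nat.card {A : Matrix (Fin 2) (Fin 2) (ZMod m) // A.det = (D : ZMod m)} : ℝ)
      = (m : ℝ) ^ 2 * ((m : ℝ) * ∏ p ∈ m.primeFactors, (1 - 1 / (p : ℝ) ^ 2)) := by
    rw [h1]
    push_cast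
    rw [Finset.sum_congr rfl (fun b _ => count_real D i j b), ← Finset.mul_sum,
      sum_prod_identity m]
  refine ⟨count_real D i j a, ?_⟩
  rw [count_real D i j a, h2, nuPMF]
  have hm2 : (m : ℝ) ^ 2 ≠ 0 := pow_ne_zero 2 hm0
  rw [mul_div_mul_left _ _ hm2]
end

section
/- Let m ≥ 2 be an integer and let m' = ∏_{p | m} p be the greatest square-free divisor of m. Then {∏_{i=1}^4 [[0,1],[1,x_i]] : x_1, x_2, x_3, x_4 ∈ Z_m} = SL(2, Z_m). More precisely, for every g ∈ SL(2, Z_m) there exist at least φ(m') elements y ∈ Z_{m'} such that whenever x_4 ∈ Z_m satisfies x_4 ≡ y (mod m'), the equation ∏_{i=1}^4 [[0,1],[1,x_i]] = g has a solution in the variables x_1, x_2, x_3 ∈ Z_m. -/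
open Finset
open scoped Classical

/-- The greatest square-free divisor (radical) `m' = ∏_{p ∣ m} p` of `m`. -/
def sqfRad (m : ℕ) : ℕ := ∏ p ∈ m.primeFactors, p

lemma sqfRad_dvd (m : ℕ) : sqfRad m ∣ m := Nat.prod_primeFactors_dvd m

lemma sqfRad_ne_zero (m : ℕ) : sqfRad m ≠ 0 :=
  (Finset.prod_pos fun _ hp => (Nat.prime_of_mem_primeFactors hp).pos).ne'

instance (m : ℕ) : NeZero (sqfRad m) := ⟨sqfRad_ne_zero m⟩

lemma coprime_of_coprime_sqfRad {m k : ℕ} (hm : m ≠ 0) (h : Nat.Coprime k (sqfRad m)) :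
    Nat.Coprime k m := by
  by_contra hc
  obtain ⟨p, hp, hpk, hpm⟩ := Nat.Prime.not_coprime_iff_dvd.mp hc
  have hmem : p ∈ m.primeFactors := Nat.mem_primeFactors.mpr ⟨hp, hpm, hm⟩
  exact Nat.Prime.not_coprime_iff_dvd.mpr ⟨p, hp, hpk, Finset.dvd_prod_of_mem _ hmem⟩ h

lemma isUnit_of_cast {m : ℕ} [NeZero m] (z : ZMod m)
    (h : IsUnit ((z.val : ZMod (sqfRad m)))) : IsUnit z := by
  rw [ZMod.isUnit_iff_coprime] at h
  have : IsUnit ((z.val : ZMod m)) :=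
    (ZMod.isUnit_iff_coprime _ _).mpr (coprime_of_coprime_sqfRad (NeZero.ne m) h)
  rwa [ZMod.natCast_rightInverse z] at this

lemma pi_isUnit_iff {ι : Type*} {R : ι → Type*} [∀ i, Monoid (R i)] (f : ∀ i, R i) :
    IsUnit f ↔ ∀ i, IsUnit (f i) := by
  constructor
  · intro h i
    exact h.map (Pi.evalMonoidHom R i)
  · intro h
    choose u hu using h
    refine ⟨⟨f, fun i => ↑(u i)⁻¹, ?_, ?_⟩, rfl⟩ <;> funext i
    · show f i * ↑(u i)⁻¹ = 1
      rw [← hu i, Units.mul_inv]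
    · show ↑(u i)⁻¹ * f i = 1
      rw [← hu i, Units.inv_mul]

lemma totient_sqfRad (m : ℕ) :
    (sqfRad m).totient = ∏ p ∈ m.primeFactors, (p - 1) := by
  rw [sqfRad, Nat.totient_eq_div_primeFactors_mul,
    Nat.primeFactors_prod (fun p hp => Nat.prime_of_mem_primeFactors hp),
    Nat.div_self (Finset.prod_pos fun p hp => (Nat.prime_of_mem_primeFactors hp).pos), one_mul]

lemma card_prime (p : ℕ) [NeZero p] (hp : p.Prime) (A B C D : ZMod p) (h : A * D - B * C = 1) :
    p - 1 ≤ Fintype.card {z : ZMod p // IsUnit (B - A * z)} := by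
  haveI : Fact p.Prime := ⟨hp⟩
  rw [Fintype.card_subtype]
  have hc := Finset.card_filter_add_card_filter_not
    (s := Finset.univ) (p := fun z : ZMod p => IsUnit (B - A * z))
  rw [Finset.card_univ, ZMod.card] at hc
  have hnot : (Finset.univ.filter (fun z : ZMod p => ¬ IsUnit (B - A * z))).card ≤ 1 := by
    apply Finset.card_le_one.mpr
    intro x hx y hy
    simp only [Finset.mem_filter, isUnit_iff_ne_zero, not_not] at hx hy
    by_cases hA : A = 0
    · exfalso
      have hB : B = 0 := by rw [hA] at hx; simpa using hx.2
      rw [hA, hB] at h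
      simpa using h
    · have hxy : A * x = A * y := by
        have h1 : B = A * x := by linear_combination hx.2
        have h2 : B = A * y := by linear_combination hy.2
        rw [← h1, ← h2]
      exact mul_left_cancel₀ hA hxy
  omega

lemma count_good (m : ℕ) [NeZero m] (a b c d : ZMod (sqfRad m)) (h : a * d - b * c = 1) :
    (sqfRad m).totient ≤
      (Finset.univ.filter fun y : ZMod (sqfRad m) => IsUnit (b - a * y)).card := by
  set P := m.primeFactors with hPdef
  have hP : ∀ p ∈ P, p.Prime := fun p hp => Nat.prime_of_mem_primeFactors hp
  haveI hNZ : ∀ i : P, NeZero (i : ℕ) := fun i => ⟨(hP i i.2).pos.ne'⟩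
  have hsq : sqfRad m = ∏ i : P, (i : ℕ) := by
    rw [sqfRad, ← Finset.prod_coe_sort]
  have hcop : Pairwise (Function.onFun Nat.Coprime fun i : P => (i : ℕ)) := fun i j hij =>
    (Nat.coprime_primes (hP i i.2) (hP j j.2)).mpr fun e => hij (Subtype.ext e)
  let e : ZMod (sqfRad m) ≃+* ∀ i : P, ZMod i :=
    (ZMod.ringEquivCongr hsq).trans (ZMod.prodEquivPi _ hcop)
  have hunit : ∀ z : ZMod (sqfRad m), IsUnit z ↔ ∀ i : P, IsUnit (e z i) := by
    intro z
    rw [← pi_isUnit_iff]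
    constructor
    · exact fun hz => hz.map e.toRingHom.toMonoidHom
    · intro hz
      have := hz.map e.symm.toRingHom.toMonoidHom
      simpa using this
  have hcard : (Finset.univ.filter fun y : ZMod (sqfRad m) => IsUnit (b - a * y)).card
      = ∏ i : P, Fintype.card {z : ZMod (i : ℕ) // IsUnit (e b i - e a i * z)} := by
    rw [← Fintype.card_subtype, ← Fintype.card_pi]
    apply Fintype.card_congr
    refine (Equiv.subtypeEquiv e.toEquiv ?_).trans Equiv.subtypePiEquivPi
    intro y
    rw [hunit]
    apply forall_congr'
    intro i
    rw [map_sub, map_mul]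
    rfl
  rw [hcard, totient_sqfRad, ← Finset.prod_coe_sort]
  apply Finset.prod_le_prod'
  intro i _
  have hdi : e a i * e d i - e b i * e c i = 1 := by
    have := congrArg (fun z => e z i) h
    simpa [map_sub, map_mul] using this
  exact card_prime i (hP i i.2) _ _ _ _ hdi


lemma key_solve {m : ℕ} [NeZero m] (g : Matrix (Fin 2) (Fin 2) (ZMod m))
    (hdet : g.det = 1) (x₄ : ZMod m) (hu : IsUnit (g 0 1 - g 0 0 * x₄)) :
    ∃ x₁ x₂ x₃ : ZMod m,
      !![0, 1; 1, x₁] * !![0, 1; 1, x₂] * !![0, 1; 1, x₃] * !![0, 1; 1, x₄] = g := by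
  obtain ⟨u, hu⟩ := hu
  set a := g 0 0 with ha; set b := g 0 1 with hb; set c := g 1 0 with hc
  set d := g 1 1 with hd
  have hdet' : a * d - b * c = 1 := by rw [Matrix.det_fin_two] at hdet; exact hdet
  set w : ZMod m := ↑u⁻¹ with hwdef
  have hw : w * (b - a * x₄) = 1 := by
    rw [← hu, hwdef]; exact_mod_cast u.inv_mul
  refine ⟨w * (d - c * x₄ - 1), b - a * x₄, w * (a - 1), ?_⟩
  have hg : g = !![a, b; c, d] := by
    rw [ha, hb, hc, hd]; exact (Matrix.etaExpand_eq g).symm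
  rw [hg]
  ext i j
  fin_cases i <;> fin_cases j
  all_goals simp [Matrix.mul_apply, Fin.sum_univ_succ]
  · linear_combination (a-1)*hw
  · linear_combination (a-1)*x₄*hw
  · linear_combination (w*(d - c*x₄ - 1)*(a-1) + c)*hw + w*hdet'
  · linear_combination ((d-c*x₄-1) + x₄*(w*(d-c*x₄-1)*(a-1)+c))*hw + x₄*w*hdet'

lemma cast_val_eq {m : ℕ} [NeZero m] (x : ZMod m) :
    ((x.val : ZMod (sqfRad m))) = ZMod.castHom (sqfRad_dvd m) (ZMod (sqfRad m)) x := by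
  rw [ZMod.natCast_val, ZMod.castHom_apply]

/-- Let `m ≥ 2` and `m' = ∏_{p ∣ m} p`. Then
`{∏_{i=1}^4 [[0,1],[1,xᵢ]] : xᵢ ∈ ℤ/mℤ} = SL(2, ℤ/mℤ)`. More precisely, for every
`g ∈ SL(2, ℤ/mℤ)` there exist at least `φ(m')` elements `y ∈ ℤ/m'ℤ` such that whenever
`x₄ ∈ ℤ/mℤ` satisfies `x₄ ≡ y (mod m')`, the equation `∏_{i=1}^4 [[0,1],[1,xᵢ]] = g` has a
solution in `x₁, x₂, x₃ ∈ ℤ/mℤ`. -/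
theorem stmt_4 (m : ℕ) [NeZero m] (hm : 2 ≤ m) :
    (∀ g : Matrix (Fin 2) (Fin 2) (ZMod m),
      g.det = 1 ↔ ∃ x₁ x₂ x₃ x₄ : ZMod m,
        !![0, 1; 1, x₁] * !![0, 1; 1, x₂] * !![0, 1; 1, x₃] * !![0, 1; 1, x₄] = g) ∧
    (∀ g : Matrix (Fin 2) (Fin 2) (ZMod m), g.det = 1 →
      ∃ Y : Finset (ZMod (sqfRad m)),
        Nat.totient (sqfRad m) ≤ Y.card ∧
        ∀ y ∈ Y, ∀ x₄ : ZMod m, ((x₄.val : ZMod (sqfRad m)) = y) →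
          ∃ x₁ x₂ x₃ : ZMod m,
            !![0, 1; 1, x₁] * !![0, 1; 1, x₂] * !![0, 1; 1, x₃] * !![0, 1; 1, x₄] = g) := by
  have part2 : ∀ g : Matrix (Fin 2) (Fin 2) (ZMod m), g.det = 1 →
      ∃ Y : Finset (ZMod (sqfRad m)),
        Nat.totient (sqfRad m) ≤ Y.card ∧
        ∀ y ∈ Y, ∀ x₄ : ZMod m, ((x₄.val : ZMod (sqfRad m)) = y) →
          ∃ x₁ x₂ x₃ : ZMod m,
            !![0, 1; 1, x₁] * !![0, 1; 1, x₂] * !![0, 1; 1, x₃] * !![0, 1; 1, x₄] = g := by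
    intro g hdet
    set π : ZMod m →+* ZMod (sqfRad m) := ZMod.castHom (sqfRad_dvd m) (ZMod (sqfRad m)) with hπ
    refine ⟨Finset.univ.filter fun y => IsUnit (π (g 0 1) - π (g 0 0) * y), ?_, ?_⟩
    · apply count_good m (π (g 0 0)) (π (g 0 1)) (π (g 1 0)) (π (g 1 1))
      have hdet' : g 0 0 * g 1 1 - g 0 1 * g 1 0 = 1 := by
        rw [Matrix.det_fin_two] at hdet; exact hdet
      have := congrArg π hdet'
      simpa [map_sub, map_mul] using this
    · intro y hy x₄ hx₄
      rw [Finset.mem_filter] at hy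
      apply key_solve g hdet
      apply isUnit_of_cast
      rw [cast_val_eq, map_sub, map_mul, ← hπ]
      have hxy : π x₄ = y := by rw [hπ, ← cast_val_eq]; exact hx₄
      rw [hxy]
      exact hy.2
  refine ⟨?_, part2⟩
  intro g
  constructor
  · intro hdet
    obtain ⟨Y, hcard, hY⟩ := part2 g hdet
    have hpos : 0 < Y.card :=
      lt_of_lt_of_le (Nat.totient_pos.mpr (Nat.pos_of_ne_zero (sqfRad_ne_zero m))) hcard
    obtain ⟨y, hy⟩ := Finset.card_pos.mp hpos
    have hvl : ((y.val : ZMod m)).val = y.val := by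
      rw [ZMod.val_natCast, Nat.mod_eq_of_lt]
      exact lt_of_lt_of_le (ZMod.val_lt y) (Nat.le_of_dvd (Nat.pos_of_ne_zero (NeZero.ne m)) (sqfRad_dvd m))
    obtain ⟨x₁, x₂, x₃, hx⟩ := hY y hy ((y.val : ZMod m)) (by rw [hvl]; exact ZMod.natCast_rightInverse y)
    exact ⟨x₁, x₂, x₃, _, hx⟩
  · rintro ⟨x₁, x₂, x₃, x₄, rfl⟩
    simp [Matrix.det_mul, Matrix.det_fin_two_of]
    ring
end

section
/- For every u ∈ [0,1], ∫_0^1 ∫_0^1 |B({x}) + B({y}) − B({x+u}) − B({y+u})| dx dy = u(1−u)/3, where B(t) = t²/2 − t/2 + 1/12 is the second Bernoulli polynomial and {·} denotes the fractional part. Consequently, the function F(u) = ∫_0^1 ∫_0^1 |V(x,u,y)| dx dy, where V(x,u,y) = (2/π²) ∑_{k=1}^∞ sin(2πkx) sin(πku) cos(2πky)/k², satisfies F(u) = {u}(1−{u})/3 for all real u. -/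
/-- The second Bernoulli polynomial `B(t) = t²/2 - t/2 + 1/12`. -/
noncomputable def bernoulli2 (t : ℝ) : ℝ := t ^ 2 / 2 - t / 2 + 1 / 12

open intervalIntegral Real Set MeasureTheory

noncomputable def psi (u x : ℝ) : ℝ :=
  if x ≤ 1 - u then -u * (x - (1 - u) / 2) else (1 - u) * (x - 1 + u / 2)

lemma psi_cont (u : ℝ) : Continuous (psi u) := by
  apply Continuous.if_le (by fun_prop) (by fun_prop) continuous_id continuous_const
  intro x hx; simp only [id] at hx; rw [hx]; ring

lemma phi_eq_psi {u : ℝ} (h0 : 0 ≤ u) (h1 : u ≤ 1) {x : ℝ} (hx : x ∈ Ico (0:ℝ) 1) :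
    bernoulli2 (Int.fract x) - bernoulli2 (Int.fract (x + u)) = psi u x := by
  have hfx : Int.fract x = x := Int.fract_eq_self.mpr ⟨hx.1, hx.2⟩
  rcases lt_trichotomy x (1 - u) with h | h | h
  · have : Int.fract (x + u) = x + u := Int.fract_eq_self.mpr ⟨by linarith [hx.1], by linarith⟩
    rw [hfx, this, psi, if_pos h.le]; simp only [bernoulli2]; ring
  · have hxu : x + u = 1 := by linarith
    have : Int.fract (x + u) = 0 := by rw [hxu]; norm_num
    rw [hfx, this, psi, if_pos h.le, h]; simp only [bernoulli2]; ring
  · have : Int.fract (x + u) = x + u - 1 := by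
      have := Int.fract_add_one (x + u - 1)
      rw [show x + u - 1 + 1 = x + u by ring] at this
      rw [this, Int.fract_eq_self.mpr ⟨by linarith, by linarith [hx.2]⟩]
    rw [hfx, this, psi, if_neg (not_le.mpr h)]; simp only [bernoulli2]; ring

lemma psi_bound {u : ℝ} (h0 : 0 ≤ u) (h1 : u ≤ 1) {x : ℝ} (hx : x ∈ Icc (0:ℝ) 1) :
    |psi u x| ≤ u * (1 - u) / 2 := by
  rw [psi]; split_ifs with h
  · rw [abs_mul, abs_neg, abs_of_nonneg h0]
    have : |x - (1 - u) / 2| ≤ (1 - u) / 2 := by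
      rw [abs_le]; constructor <;> [linarith [hx.1]; linarith]
    nlinarith [abs_nonneg (x - (1 - u) / 2)]
  · rw [abs_mul, abs_of_nonneg (by linarith : (0:ℝ) ≤ 1 - u)]
    have : |x - 1 + u / 2| ≤ u / 2 := by
      rw [abs_le]; constructor <;> [linarith [not_le.mp h]; linarith [hx.2]]
    nlinarith [abs_nonneg (x - 1 + u / 2)]

lemma abs_int0 {a b : ℝ} (ha : a ≤ 0) (hb : 0 ≤ b) :
    ∫ x in a..b, |x| = a ^ 2 / 2 + b ^ 2 / 2 := by
  have h1 : ∫ x in a..(0:ℝ), |x| = a ^ 2 / 2 := by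
    rw [intervalIntegral.integral_congr (g := fun x => -x)
      (by intro x hx; rw [uIcc_of_le ha] at hx; simp [abs_of_nonpos hx.2])]
    rw [intervalIntegral.integral_neg, integral_id]; ring
  have h2 : ∫ x in (0:ℝ)..b, |x| = b ^ 2 / 2 := by
    rw [intervalIntegral.integral_congr (g := fun x => x)
      (by intro x hx; rw [uIcc_of_le hb] at hx; simp [abs_of_nonneg hx.1])]
    rw [integral_id]; ring
  rw [← intervalIntegral.integral_add_adjacent_intervals (a := a) (b := 0) (c := b)
    (continuous_abs.intervalIntegrable _ _) (continuous_abs.intervalIntegrable _ _), h1, h2]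

lemma abs_int {a b r : ℝ} (ha : a ≤ r) (hb : r ≤ b) :
    ∫ x in a..b, |x - r| = (r - a) ^ 2 / 2 + (b - r) ^ 2 / 2 := by
  rw [intervalIntegral.integral_comp_sub_right (fun x => |x|) r,
    abs_int0 (by linarith) (by linarith)]
  ring

lemma sq_int (a b r : ℝ) :
    ∫ x in a..b, (x - r) ^ 2 = ((b - r) ^ 3 - (a - r) ^ 3) / 3 := by
  rw [intervalIntegral.integral_comp_sub_right (fun x => x ^ 2) r, integral_pow]
  norm_num

lemma inner_int {u : ℝ} (h0 : 0 < u) (h1 : u < 1) {w : ℝ} (hw : |w| ≤ u * (1 - u) / 2) :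
    ∫ x in (0:ℝ)..1, |psi u x + w| = u * (1 - u) / 4 + w ^ 2 / (u * (1 - u)) := by
  have hu1 : (0:ℝ) < 1 - u := by linarith
  have hu0 : u ≠ 0 := ne_of_gt h0
  have hu1' : (1:ℝ) - u ≠ 0 := ne_of_gt hu1
  obtain ⟨hw1, hw2⟩ := abs_le.mp hw
  have hwu1 : w / u ≤ (1 - u) / 2 := by rw [div_le_iff₀ h0]; nlinarith
  have hwu2 : -((1 - u) / 2) ≤ w / u := by rw [le_div_iff₀ h0]; nlinarith
  have hwv1 : w / (1 - u) ≤ u / 2 := by rw [div_le_iff₀ hu1]; nlinarith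
  have hwv2 : -(u / 2) ≤ w / (1 - u) := by rw [le_div_iff₀ hu1]; nlinarith
  have hc : Continuous fun x => |psi u x + w| :=
    continuous_abs.comp ((psi_cont u).add continuous_const)
  have split : ∫ x in (0:ℝ)..1, |psi u x + w|
      = (∫ x in (0:ℝ)..(1 - u), |psi u x + w|) + ∫ x in (1 - u)..(1:ℝ), |psi u x + w| := by
    rw [intervalIntegral.integral_add_adjacent_intervals
      (hc.intervalIntegrable _ _) (hc.intervalIntegrable _ _)]
  have e1 : ∫ x in (0:ℝ)..(1 - u), |psi u x + w|
      = u * (((1 - u) / 2 + w / u) ^ 2 / 2 + (1 - u - ((1 - u) / 2 + w / u)) ^ 2 / 2) := by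
    rw [intervalIntegral.integral_congr (g := fun x => u * |x - ((1 - u) / 2 + w / u)|)]
    · rw [intervalIntegral.integral_const_mul, abs_int (by linarith) (by linarith)]
      ring
    · intro x hx
      rw [uIcc_of_le (by linarith)] at hx
      dsimp only
      rw [psi, if_pos hx.2,
        show -u * (x - (1 - u) / 2) + w = -(u * (x - ((1 - u) / 2 + w / u))) by
          field_simp; ring,
        abs_neg, abs_mul, abs_of_pos h0]
  have e2 : ∫ x in (1 - u)..(1:ℝ), |psi u x + w|
      = (1 - u) * ((1 - u / 2 - w / (1 - u) - (1 - u)) ^ 2 / 2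
          + (1 - (1 - u / 2 - w / (1 - u))) ^ 2 / 2) := by
    rw [intervalIntegral.integral_congr (g := fun x => (1 - u) * |x - (1 - u / 2 - w / (1 - u))|)]
    · rw [intervalIntegral.integral_const_mul, abs_int (by linarith) (by linarith)]
    · intro x hx
      rw [uIcc_of_le (by linarith)] at hx
      dsimp only
      have hpsi : psi u x = (1 - u) * (x - 1 + u / 2) := by
        rw [psi]; split_ifs with h
        · have hx' : x = 1 - u := le_antisymm h hx.1
          rw [hx']; ring
        · rfl
      rw [hpsi,
        show (1 - u) * (x - 1 + u / 2) + w = (1 - u) * (x - (1 - u / 2 - w / (1 - u))) by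
          field_simp; ring,
        abs_mul, abs_of_pos hu1]
  rw [split, e1, e2]
  field_simp
  ring

lemma psi_sq_int {u : ℝ} (h0 : 0 < u) (h1 : u < 1) :
    ∫ x in (0:ℝ)..1, (psi u x) ^ 2 = u ^ 2 * (1 - u) ^ 2 / 12 := by
  have hu1 : (0:ℝ) < 1 - u := by linarith
  have hc : Continuous fun x => (psi u x) ^ 2 := (psi_cont u).pow 2
  rw [← intervalIntegral.integral_add_adjacent_intervals (a := (0:ℝ)) (b := 1 - u) (c := 1)
    (hc.intervalIntegrable _ _) (hc.intervalIntegrable _ _)]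
  have e1 : ∫ x in (0:ℝ)..(1 - u), (psi u x) ^ 2
      = u ^ 2 * (1 - u) ^ 3 / 12 := by
    rw [intervalIntegral.integral_congr (g := fun x => u ^ 2 * (x - (1 - u) / 2) ^ 2)]
    · rw [intervalIntegral.integral_const_mul, sq_int]; ring
    · intro x hx
      rw [uIcc_of_le (by linarith)] at hx
      dsimp only
      rw [psi, if_pos hx.2]; ring
  have e2 : ∫ x in (1 - u)..(1:ℝ), (psi u x) ^ 2
      = (1 - u) ^ 2 * u ^ 3 / 12 := by
    rw [intervalIntegral.integral_congr (g := fun x => (1 - u) ^ 2 * (x - (1 - u / 2)) ^ 2)]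
    · rw [intervalIntegral.integral_const_mul, sq_int]; ring
    · intro x hx
      rw [uIcc_of_le (by linarith)] at hx
      dsimp only
      rw [psi]; split_ifs with h
      · have hx' : x = 1 - u := le_antisymm h hx.1
        rw [hx']; ring
      · ring
  rw [e1, e2]; ring

lemma part1 {u : ℝ} (h0 : 0 ≤ u) (h1 : u ≤ 1) :
    (∫ x in (0 : ℝ)..1, ∫ y in (0 : ℝ)..1,
        |bernoulli2 (Int.fract x) + bernoulli2 (Int.fract y)
          - bernoulli2 (Int.fract (x + u)) - bernoulli2 (Int.fract (y + u))|)
      = u * (1 - u) / 3 := by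
  rcases eq_or_lt_of_le h0 with rfl | h0'
  · simp
  rcases eq_or_lt_of_le h1 with rfl | h1'
  · have hz : ∀ x y : ℝ, |bernoulli2 (Int.fract x) + bernoulli2 (Int.fract y)
        - bernoulli2 (Int.fract (x + 1)) - bernoulli2 (Int.fract (y + 1))| = 0 := by
      intro x y; rw [Int.fract_add_one, Int.fract_add_one]; simp
    simp only [hz, intervalIntegral.integral_zero]
    norm_num
  have hu0 : u ≠ 0 := ne_of_gt h0'
  have hu1 : (0:ℝ) < 1 - u := by linarith
  have hu1' : (1:ℝ) - u ≠ 0 := ne_of_gt hu1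
  have hone : ({(1:ℝ)}ᶜ : Set ℝ) ∈ MeasureTheory.ae (volume : Measure ℝ) :=
    MeasureTheory.compl_mem_ae_iff.mpr (measure_singleton 1)
  have step1 : (∫ x in (0 : ℝ)..1, ∫ y in (0 : ℝ)..1,
        |bernoulli2 (Int.fract x) + bernoulli2 (Int.fract y)
          - bernoulli2 (Int.fract (x + u)) - bernoulli2 (Int.fract (y + u))|)
      = ∫ x in (0:ℝ)..1, (u * (1 - u) / 4 + (psi u x) ^ 2 / (u * (1 - u))) := by
    apply intervalIntegral.integral_congr_ae
    filter_upwards [hone] with x hx1 hxI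
    rw [Set.uIoc_of_le (zero_le_one)] at hxI
    have hx : x ∈ Ico (0:ℝ) 1 := ⟨hxI.1.le, lt_of_le_of_ne hxI.2 hx1⟩
    have inner : (∫ y in (0 : ℝ)..1,
        |bernoulli2 (Int.fract x) + bernoulli2 (Int.fract y)
          - bernoulli2 (Int.fract (x + u)) - bernoulli2 (Int.fract (y + u))|)
        = ∫ y in (0:ℝ)..1, |psi u y + psi u x| := by
      apply intervalIntegral.integral_congr_ae
      filter_upwards [hone] with y hy1 hyI
      rw [Set.uIoc_of_le (zero_le_one)] at hyI
      have hy : y ∈ Ico (0:ℝ) 1 := ⟨hyI.1.le, lt_of_le_of_ne hyI.2 hy1⟩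
      rw [show bernoulli2 (Int.fract x) + bernoulli2 (Int.fract y)
          - bernoulli2 (Int.fract (x + u)) - bernoulli2 (Int.fract (y + u))
          = (bernoulli2 (Int.fract y) - bernoulli2 (Int.fract (y + u)))
            + (bernoulli2 (Int.fract x) - bernoulli2 (Int.fract (x + u))) by ring,
        phi_eq_psi h0 h1 hy, phi_eq_psi h0 h1 hx]
    rw [inner, inner_int h0' h1' (psi_bound h0 h1 ⟨hx.1, hx.2.le⟩)]
  rw [step1, intervalIntegral.integral_add intervalIntegrable_const
    ((show Continuous fun x => psi u x ^ 2 / (u * (1 - u)) from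
      ((psi_cont u).pow 2).div_const _).intervalIntegrable _ _),
    intervalIntegral.integral_const, intervalIntegral.integral_div, psi_sq_int h0' h1']
  simp only [smul_eq_mul]
  field_simp
  ring


/-- The kernel `V(x,u,y) = (2/π²) ∑_{k=1}^∞ sin(2πkx) sin(πku) cos(2πky) / k²`. -/
noncomputable def kestenV (x u y : ℝ) : ℝ :=
  (2 / Real.pi ^ 2) * ∑' k : ℕ,
    Real.sin (2 * Real.pi * (k + 1) * x) * Real.sin (Real.pi * (k + 1) * u) *
      Real.cos (2 * Real.pi * (k + 1) * y) / ((k : ℝ) + 1) ^ 2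

lemma b2_eval {w : ℝ} (hw : w ∈ Icc (0:ℝ) 1) :
    ((-1 : ℝ) ^ (1 + 1) * (2 * π) ^ (2 * 1) / 2 / ((2 * 1).factorial : ℝ) *
      (Polynomial.map (algebraMap ℚ ℝ) (Polynomial.bernoulli (2 * 1))).eval w)
    = 2 * π ^ 2 * bernoulli2 w := by
  have : (Polynomial.bernoulli 2) = Polynomial.C (1/6 : ℚ) - Polynomial.X + Polynomial.X ^ 2 := by
    norm_num [Polynomial.bernoulli, Finset.sum_range_succ]
    simp [Polynomial.X_pow_eq_monomial, ← Polynomial.monomial_one_one_eq_X]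
    ring
  norm_num [this, bernoulli2]
  ring

lemma bf_hasSum (t : ℝ) :
    HasSum (fun n : ℕ => Real.cos (2 * π * (n + 1) * t) / ((n : ℝ) + 1) ^ 2)
      (2 * π ^ 2 * bernoulli2 (Int.fract t)) := by
  have hx : Int.fract t ∈ Icc (0:ℝ) 1 := ⟨Int.fract_nonneg t, (Int.fract_lt_one t).le⟩
  have h := hasSum_one_div_nat_pow_mul_cos (k := 1) one_ne_zero hx
  rw [b2_eval hx] at h
  have h2 := (hasSum_nat_add_iff' (f := fun n : ℕ =>
    1 / (n : ℝ) ^ (2 * 1) * Real.cos (2 * π * n * Int.fract t)) 1).mpr h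
  simp only [Finset.sum_range_one, Nat.cast_zero] at h2
  norm_num at h2
  convert h2 using 1; rfl; funext n
  have key : Real.cos (2 * π * (↑n + 1) * t) = Real.cos (2 * π * (↑n + 1) * Int.fract t) := by
    have : 2 * π * (↑n + 1) * t = 2 * π * (↑n + 1) * Int.fract t
        + ((((n:ℤ) + 1) * ⌊t⌋ : ℤ) : ℝ) * (2 * π) := by
      push_cast
      rw [Int.fract]
      ring
    rw [this, Real.cos_add_int_mul_two_pi]
  rw [key]
  push_cast
  ring

lemma trig_identity (a b c : ℝ) :
    Real.cos (a + b - c) - Real.cos (a + b + c) + (Real.cos (a - b - c) - Real.cos (a - b + c))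
      = 4 * (Real.sin a * Real.sin c * Real.cos b) := by
  simp only [Real.cos_add, Real.cos_sub, Real.sin_add, Real.sin_sub]
  ring

lemma kestenV_eq (x u y : ℝ) : kestenV x u y =
    bernoulli2 (Int.fract (x + y - u / 2)) - bernoulli2 (Int.fract (x + y + u / 2))
      + (bernoulli2 (Int.fract (x - y - u / 2)) - bernoulli2 (Int.fract (x - y + u / 2))) := by
  have h1 := bf_hasSum (x + y - u / 2)
  have h2 := bf_hasSum (x + y + u / 2)
  have h3 := bf_hasSum (x - y - u / 2)
  have h4 := bf_hasSum (x - y + u / 2)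
  have hsum := (h1.sub h2).add (h3.sub h4)
  have hterm : ∀ n : ℕ,
      (Real.cos (2 * π * (n + 1) * (x + y - u / 2)) / ((n : ℝ) + 1) ^ 2
        - Real.cos (2 * π * (n + 1) * (x + y + u / 2)) / ((n : ℝ) + 1) ^ 2
        + (Real.cos (2 * π * (n + 1) * (x - y - u / 2)) / ((n : ℝ) + 1) ^ 2
          - Real.cos (2 * π * (n + 1) * (x - y + u / 2)) / ((n : ℝ) + 1) ^ 2))
      = 4 * (Real.sin (2 * Real.pi * (n + 1) * x) * Real.sin (Real.pi * (n + 1) * u) *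
          Real.cos (2 * Real.pi * (n + 1) * y) / ((n : ℝ) + 1) ^ 2) := by
    intro n
    have := trig_identity (2 * π * (n + 1) * x) (2 * π * (n + 1) * y) (π * (n + 1) * u)
    rw [show 2 * π * (↑n + 1) * (x + y - u / 2)
        = 2 * π * (↑n + 1) * x + 2 * π * (↑n + 1) * y - π * (↑n + 1) * u by ring,
      show 2 * π * (↑n + 1) * (x + y + u / 2)
        = 2 * π * (↑n + 1) * x + 2 * π * (↑n + 1) * y + π * (↑n + 1) * u by ring,
      show 2 * π * (↑n + 1) * (x - y - u / 2)
        = 2 * π * (↑n + 1) * x - 2 * π * (↑n + 1) * y - π * (↑n + 1) * u by ring,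
      show 2 * π * (↑n + 1) * (x - y + u / 2)
        = 2 * π * (↑n + 1) * x - 2 * π * (↑n + 1) * y + π * (↑n + 1) * u by ring]
    linear_combination this / ((n:ℝ) + 1) ^ 2
  simp only [hterm] at hsum
  have hf : HasSum (fun n : ℕ => Real.sin (2 * Real.pi * (n + 1) * x) *
        Real.sin (Real.pi * (n + 1) * u) * Real.cos (2 * Real.pi * (n + 1) * y) / ((n : ℝ) + 1) ^ 2)
      ((2 * π ^ 2 * bernoulli2 (Int.fract (x + y - u / 2))
          - 2 * π ^ 2 * bernoulli2 (Int.fract (x + y + u / 2)) +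
        (2 * π ^ 2 * bernoulli2 (Int.fract (x - y - u / 2))
          - 2 * π ^ 2 * bernoulli2 (Int.fract (x - y + u / 2)))) / 4) := by
    convert hsum.div_const 4 using 1; rfl; funext n
    ring
  rw [kestenV, hf.tsum_eq]
  have hpi : π ≠ 0 := Real.pi_ne_zero
  field_simp
  ring

lemma bf_cont : Continuous (fun t : ℝ => bernoulli2 (Int.fract t)) := by
  have : Continuous ((fun t : ℝ => bernoulli2 t) ∘ Int.fract) :=
    ContinuousOn.comp_fract''
      (Continuous.continuousOn (by unfold bernoulli2; fun_prop))
      (by norm_num [bernoulli2])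
  exact this

lemma bf_per : Function.Periodic (fun t : ℝ => bernoulli2 (Int.fract t)) 1 := by
  intro t; simp [Int.fract_add_one]

open MeasureTheory in
set_option maxHeartbeats 1000000 in
lemma swap_cont {F : ℝ → ℝ → ℝ} (hF : Continuous (Function.uncurry F)) :
    ∫ x in (0:ℝ)..1, ∫ y in (0:ℝ)..1, F x y = ∫ y in (0:ℝ)..1, ∫ x in (0:ℝ)..1, F x y := by
  simp only [intervalIntegral.integral_of_le zero_le_one]
  rw [MeasureTheory.integral_integral_swap]
  rw [MeasureTheory.Measure.prod_restrict]
  have h1 : MeasureTheory.IntegrableOn (Function.uncurry F) (Icc 0 1 ×ˢ Icc 0 1)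
      ((volume : Measure ℝ).prod (volume : Measure ℝ)) :=
    hF.continuousOn.integrableOn_compact (isCompact_Icc.prod isCompact_Icc)
  exact h1.mono_set (Set.prod_mono Ioc_subset_Icc_self Ioc_subset_Icc_self)

noncomputable def kG (u t : ℝ) : ℝ :=
  bernoulli2 (Int.fract (t - u / 2)) - bernoulli2 (Int.fract (t + u / 2))

lemma kG_cont (u : ℝ) : Continuous (kG u) := by
  have h1 : Continuous fun t : ℝ => bernoulli2 (Int.fract (t - u / 2)) :=
    bf_cont.comp (continuous_sub_right _)
  have h2 : Continuous fun t : ℝ => bernoulli2 (Int.fract (t + u / 2)) :=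
    bf_cont.comp (continuous_add_right _)
  exact h1.sub h2

lemma kG_per (u : ℝ) : Function.Periodic (kG u) 1 := by
  intro t
  unfold kG
  rw [show t + 1 - u / 2 = (t - u / 2) + 1 by ring, show t + 1 + u / 2 = (t + u / 2) + 1 by ring,
    Int.fract_add_one, Int.fract_add_one]

lemma per_shift {f : ℝ → ℝ} (hf : Function.Periodic f 1) (c : ℝ) :
    ∫ t in (0:ℝ)..1, f (t + c) = ∫ t in (0:ℝ)..1, f t := by
  rw [intervalIntegral.integral_comp_add_right f c, show (0:ℝ) + c = c from zero_add c,
    show (1:ℝ) + c = c + 1 from add_comm 1 c, hf.intervalIntegral_add_eq c 0]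
  norm_num

lemma kestenV_eq' (x u y : ℝ) : kestenV x u y = kG u (x + y) + kG u (x - y) := by
  rw [kestenV_eq]; rfl

lemma stepB (u x : ℝ) :
    ∫ y in (0:ℝ)..1, |kG u (x + y) + kG u (x - y)|
      = ∫ y in (0:ℝ)..1, |kG u y + kG u (2 * x - y)| := by
  have hper : Function.Periodic (fun z => |kG u z + kG u (2 * x - z)|) 1 := by
    intro z
    dsimp only
    rw [show 2 * x - (z + 1) = (2 * x - z) - 1 by ring, (kG_per u).sub_eq (2 * x - z),
      kG_per u z]
  have e : EqOn (fun y => |kG u (x + y) + kG u (x - y)|)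
      (fun y => (fun z => |kG u z + kG u (2 * x - z)|) (x + y)) (uIcc (0:ℝ) 1) := by
    intro y _
    dsimp only
    rw [show 2 * x - (x + y) = x - y by ring]
  rw [intervalIntegral.integral_congr e,
    intervalIntegral.integral_comp_add_left (fun z => |kG u z + kG u (2 * x - z)|) x,
    show x + (0:ℝ) = x from add_zero x, show x + (1:ℝ) = x + 1 from rfl,
    hper.intervalIntegral_add_eq x 0]
  norm_num

lemma stepC (u y : ℝ) :
    ∫ x in (0:ℝ)..1, |kG u y + kG u (2 * x - y)|
      = ∫ t in (0:ℝ)..1, |kG u y + kG u t| := by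
  set q : ℝ → ℝ := fun t => |kG u y + kG u (t - y)| with hq
  have hqc : Continuous q := continuous_abs.comp
    (continuous_const.add ((kG_cont u).comp (continuous_sub_right _)))
  have hqper : Function.Periodic q 1 := by
    intro t
    simp only [hq]
    rw [show t + 1 - y = (t - y) + 1 by ring, kG_per u]
  have h1 : ∫ x in (0:ℝ)..1, |kG u y + kG u (2 * x - y)| = ∫ x in (0:ℝ)..1, q (2 * x) := by
    apply intervalIntegral.integral_congr
    intro x _
    simp only [hq]
  rw [h1, intervalIntegral.integral_comp_mul_left q two_ne_zero]
  norm_num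
  have h2 : ∫ t in (0:ℝ)..2, q t = (∫ t in (0:ℝ)..1, q t) + ∫ t in (1:ℝ)..2, q t := by
    rw [intervalIntegral.integral_add_adjacent_intervals
      (hqc.intervalIntegrable _ _) (hqc.intervalIntegrable _ _)]
  have h3 : ∫ t in (1:ℝ)..2, q t = ∫ t in (0:ℝ)..1, q t := by
    have := hqper.intervalIntegral_add_eq 1 0
    norm_num at this
    exact this
  rw [h2, h3]
  have h4 : ∫ t in (0:ℝ)..1, q t = ∫ t in (0:ℝ)..1, |kG u y + kG u t| := by
    have : (fun t => |kG u y + kG u t|) = fun t => q (t + y) := by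
      funext t
      simp only [hq, add_sub_cancel_right]
    rw [this, per_shift hqper y]
  rw [h4]
  ring

lemma fract_shift (y u : ℝ) : Int.fract (y + u) = Int.fract (y + Int.fract u) := by
  rw [show y + u = (y + Int.fract u) + (⌊u⌋ : ℤ) by rw [Int.fract]; push_cast; ring,
    Int.fract_add_intCast]

lemma part2 (u : ℝ) :
    (∫ x in (0 : ℝ)..1, ∫ y in (0 : ℝ)..1, |kestenV x u y|)
      = Int.fract u * (1 - Int.fract u) / 3 := by
  have hWper : Function.Periodic
      (fun y => ∫ t in (0:ℝ)..1, |kG u y + kG u (t + u / 2)|) 1 := by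
    intro y
    dsimp only
    apply intervalIntegral.integral_congr
    intro t _
    rw [kG_per u y]
  calc (∫ x in (0 : ℝ)..1, ∫ y in (0 : ℝ)..1, |kestenV x u y|)
      = ∫ x in (0:ℝ)..1, ∫ y in (0:ℝ)..1, |kG u (x + y) + kG u (x - y)| := by
        apply intervalIntegral.integral_congr
        intro x _
        apply intervalIntegral.integral_congr
        intro y _
        dsimp only
        rw [kestenV_eq']
    _ = ∫ x in (0:ℝ)..1, ∫ y in (0:ℝ)..1, |kG u y + kG u (2 * x - y)| := by
        apply intervalIntegral.integral_congr
        intro x _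
        exact stepB u x
    _ = ∫ y in (0:ℝ)..1, ∫ x in (0:ℝ)..1, |kG u y + kG u (2 * x - y)| := by
        apply swap_cont (F := fun x y => |kG u y + kG u (2 * x - y)|)
        apply continuous_abs.comp
        exact ((kG_cont u).comp continuous_snd).add
          ((kG_cont u).comp ((continuous_const.mul continuous_fst).sub continuous_snd))
    _ = ∫ y in (0:ℝ)..1, ∫ t in (0:ℝ)..1, |kG u y + kG u t| := by
        apply intervalIntegral.integral_congr
        intro y _
        exact stepC u y
    _ = ∫ y in (0:ℝ)..1, ∫ t in (0:ℝ)..1, |kG u y + kG u (t + u / 2)| := by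
        apply intervalIntegral.integral_congr
        intro y _
        dsimp only
        refine (per_shift (f := fun t => |kG u y + kG u t|) ?_ (u / 2)).symm
        intro t
        dsimp only
        rw [kG_per u t]
    _ = ∫ y in (0:ℝ)..1, ∫ t in (0:ℝ)..1, |kG u (y + u / 2) + kG u (t + u / 2)| :=
        (per_shift hWper (u / 2)).symm
    _ = ∫ y in (0:ℝ)..1, ∫ t in (0:ℝ)..1,
          |bernoulli2 (Int.fract y) + bernoulli2 (Int.fract t)
            - bernoulli2 (Int.fract (y + u)) - bernoulli2 (Int.fract (t + u))| := by
        apply intervalIntegral.integral_congr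
        intro y _
        apply intervalIntegral.integral_congr
        intro t _
        dsimp only
        unfold kG
        rw [show y + u / 2 - u / 2 = y by ring, show y + u / 2 + u / 2 = y + u by ring,
          show t + u / 2 - u / 2 = t by ring, show t + u / 2 + u / 2 = t + u by ring]
        congr 1
        ring
    _ = ∫ y in (0:ℝ)..1, ∫ t in (0:ℝ)..1,
          |bernoulli2 (Int.fract y) + bernoulli2 (Int.fract t)
            - bernoulli2 (Int.fract (y + Int.fract u))
            - bernoulli2 (Int.fract (t + Int.fract u))| := by
        apply intervalIntegral.integral_congr
        intro y _
        apply intervalIntegral.integral_congr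
        intro t _
        dsimp only
        rw [fract_shift y u, fract_shift t u]
    _ = Int.fract u * (1 - Int.fract u) / 3 :=
        part1 (Int.fract_nonneg u) (Int.fract_lt_one u).le

/-- For every `u ∈ [0,1]`,
`∫₀¹∫₀¹ |B({x}) + B({y}) - B({x+u}) - B({y+u})| dx dy = u(1-u)/3`, where `B` is the second
Bernoulli polynomial and `{·}` the fractional part. Consequently
`F(u) = ∫₀¹∫₀¹ |V(x,u,y)| dx dy = {u}(1-{u})/3` for all real `u`. -/
theorem stmt_5 :
    (∀ u ∈ Set.Icc (0 : ℝ) 1,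
      (∫ x in (0 : ℝ)..1, ∫ y in (0 : ℝ)..1,
        |bernoulli2 (Int.fract x) + bernoulli2 (Int.fract y)
          - bernoulli2 (Int.fract (x + u)) - bernoulli2 (Int.fract (y + u))|)
        = u * (1 - u) / 3) ∧
    (∀ u : ℝ,
      (∫ x in (0 : ℝ)..1, ∫ y in (0 : ℝ)..1, |kestenV x u y|)
        = Int.fract u * (1 - Int.fract u) / 3) := by
  exact ⟨fun u hu => part1 hu.1 hu.2, part2⟩
end

section
/- For every integer m ≥ 2, ∑_{a ∈ Z_m} ν_a · {a/m}(1 − {a/m}) = 1/6, where for a ∈ Z_m the value {a/m} is computed with the integer representative of a in {0,1,…,m−1}. In particular, this sum does not depend on m. -/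
open Finset ArithmeticFunction

open Finset ArithmeticFunction
open scoped ArithmeticFunction.Moebius

noncomputable def invPow (k : ℕ) : ArithmeticFunction ℝ :=
  ⟨fun n => if n = 0 then 0 else ((n : ℝ)⁻¹) ^ k, by simp⟩

lemma invPow_apply {k n : ℕ} (hn : n ≠ 0) : invPow k n = ((n : ℝ)⁻¹) ^ k := by
  simp [invPow, hn, ArithmeticFunction.coe_mk]

lemma invPow_mult (k : ℕ) : (invPow k).IsMultiplicative := by
  constructor
  · simp [invPow_apply]
  · intro m n h
    rcases eq_or_ne m 0 with rfl | hm
    · simp [Nat.coprime_zero_left] at h; subst h; simp [invPow]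
    rcases eq_or_ne n 0 with rfl | hn
    · simp [Nat.coprime_zero_right] at h; subst h; simp [invPow]
    rw [invPow_apply hm, invPow_apply hn, invPow_apply (Nat.mul_ne_zero hm hn)]
    push_cast
    rw [mul_inv, mul_pow]

lemma squarefree_rad (n : ℕ) : Squarefree (∏ p ∈ n.primeFactors, p) := by
  have hne : (∏ p ∈ n.primeFactors, p) ≠ 0 :=
    Finset.prod_ne_zero_iff.2 fun p hp => (Nat.prime_of_mem_primeFactors hp).ne_zero
  rw [Nat.squarefree_iff_factorization_le_one hne]
  intro q
  rw [Nat.factorization_prod (fun p hp => (Nat.prime_of_mem_primeFactors hp).ne_zero)]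
  simp only [Finsupp.finset_sum_apply]
  calc ∑ p ∈ n.primeFactors, p.factorization q
      = ∑ p ∈ n.primeFactors, if q = p then 1 else 0 := by
        refine Finset.sum_congr rfl fun p hp => ?_
        rw [Nat.Prime.factorization (Nat.prime_of_mem_primeFactors hp), Finsupp.single_apply]
        simp [eq_comm]
    _ ≤ 1 := by rw [Finset.sum_ite_eq]; split <;> simp

lemma moeb_sum (k : ℕ) {n : ℕ} (hn : n ≠ 0) :
    ∏ p ∈ n.primeFactors, (1 - 1 / (p : ℝ) ^ k) = ∑ d ∈ n.divisors, (μ d : ℝ) / (d : ℝ) ^ k := by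
  set r := ∏ p ∈ n.primeFactors, p with hr
  have hsf : Squarefree r := squarefree_rad n
  have hrpf : r.primeFactors = n.primeFactors :=
    Nat.primeFactors_prod (fun p hp => Nat.prime_of_mem_primeFactors hp)
  have hrdvd : r ∣ n := Nat.prod_primeFactors_dvd n
  have h1 : ∏ p ∈ n.primeFactors, (1 - 1 / (p : ℝ) ^ k)
      = ∏ p ∈ r.primeFactors, (1 - invPow k p) := by
    rw [hrpf]
    refine Finset.prod_congr rfl fun p hp => ?_
    rw [invPow_apply (Nat.prime_of_mem_primeFactors hp).ne_zero, one_div, inv_pow]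
  rw [h1, (invPow_mult k).prodPrimeFactors_one_sub_of_squarefree _ hsf]
  rw [Finset.sum_subset (Nat.divisors_subset_of_dvd hn hrdvd)]
  · refine Finset.sum_congr rfl fun d hd => ?_
    have hd0 : d ≠ 0 := (Nat.mem_divisors.1 hd).2 |> fun h => Nat.pos_of_mem_divisors hd |>.ne'
    rw [invPow_apply hd0, div_eq_mul_inv, inv_pow]
  · intro d hd hdr
    have hd0 : d ≠ 0 := (Nat.pos_of_mem_divisors hd).ne'
    have : ¬ Squarefree d := by
      intro hsq
      apply hdr
      rw [Nat.mem_divisors]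
      refine ⟨?_, hsf.ne_zero⟩
      calc d = ∏ p ∈ d.primeFactors, p := (Nat.prod_primeFactors_of_squarefree hsq).symm
        _ ∣ r := Finset.prod_dvd_prod_of_subset _ _ _
             (Nat.primeFactors_mono (Nat.mem_divisors.1 hd).1 hn)
    rw [moebius_eq_zero_of_not_squarefree this]
    simp

lemma sum_id' (k : ℕ) : ∑ b ∈ range k, (b : ℝ) = k * (k - 1) / 2 := by
  induction k with
  | zero => simp
  | succ n ih => rw [Finset.sum_range_succ, ih]; push_cast; ring

lemma sum_sq' (k : ℕ) : ∑ b ∈ range k, (b : ℝ) ^ 2 = k * (k - 1) * (2 * k - 1) / 6 := by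
  induction k with
  | zero => simp
  | succ n ih => rw [Finset.sum_range_succ, ih]; push_cast; ring

lemma quad_sum (k : ℕ) (hk : k ≠ 0) :
    ∑ b ∈ range k, ((b : ℝ) / k * (1 - (b : ℝ) / k)) = ((k : ℝ) ^ 2 - 1) / (6 * k) := by
  have hk' : (k : ℝ) ≠ 0 := Nat.cast_ne_zero.2 hk
  have : ∀ b : ℕ, (b : ℝ) / k * (1 - (b : ℝ) / k) = (b : ℝ) * (1/k) - (b:ℝ)^2 * (1/k^2) := by
    intro b; field_simp
  simp_rw [this]
  rw [Finset.sum_sub_distrib, ← Finset.sum_mul, ← Finset.sum_mul, sum_id', sum_sq']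
  field_simp
  ring

lemma gcd_divisors (a m : ℕ) (hm : m ≠ 0) :
    (Nat.gcd a m).divisors = m.divisors.filter (· ∣ a) := by
  ext e
  simp only [Nat.mem_divisors, Finset.mem_filter, Nat.dvd_gcd_iff]
  constructor
  · rintro ⟨⟨h1, h2⟩, -⟩; exact ⟨⟨h2, hm⟩, h1⟩
  · rintro ⟨⟨h2, -⟩, h1⟩
    exact ⟨⟨h1, h2⟩, Nat.gcd_ne_zero_right hm⟩

lemma moebius_sum_zero {m : ℕ} (hm : 2 ≤ m) : ∑ d ∈ m.divisors, ((μ d : ℤ) : ℝ) = 0 := by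
  have h := congrArg (fun f : ArithmeticFunction ℤ => f m) moebius_mul_coe_zeta
  simp only [coe_mul_zeta_apply, one_apply] at h
  rw [if_neg (by omega)] at h
  rw [← Int.cast_sum, h, Int.cast_zero]

lemma innerSumAux (m e : ℕ) (hm : m ≠ 0) (he : e ∣ m) (he0 : e ≠ 0) :
    ∑ a ∈ (range m).filter (e ∣ ·), ((a : ℝ) / m * (1 - (a : ℝ) / m))
      = ∑ b ∈ range (m / e), ((b : ℝ) / (m / e : ℕ) * (1 - (b : ℝ) / (m / e : ℕ))) := by
  have hek : e * (m / e) = m := Nat.mul_div_cancel' he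
  have hk0 : m / e ≠ 0 := by
    intro h; rw [h, Nat.mul_zero] at hek; exact hm hek.symm
  refine Finset.sum_nbij' (fun a => a / e) (fun b => e * b) ?_ ?_ ?_ ?_ ?_
  · intro a ha
    simp only [Finset.mem_filter, Finset.mem_range] at ha ⊢
    exact Nat.div_lt_div_of_lt_of_dvd ⟨m / e, hek.symm⟩ ha.1
  · intro b hb
    simp only [Finset.mem_filter, Finset.mem_range] at hb ⊢
    constructor
    · calc e * b < e * (m / e) := by
            exact (Nat.mul_lt_mul_left (Nat.pos_of_ne_zero he0)).2 hb
        _ = m := hek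
    · exact Dvd.intro b rfl
  · intro a ha
    simp only [Finset.mem_filter] at ha
    exact Nat.mul_div_cancel' ha.2
  · intro b hb
    exact Nat.mul_div_cancel_left b (Nat.pos_of_ne_zero he0)
  · intro a ha
    simp only [Finset.mem_filter, Finset.mem_range] at ha
    obtain ⟨c, rfl⟩ := ha.2
    rw [Nat.mul_div_cancel_left c (Nat.pos_of_ne_zero he0)]
    have : ((e * c : ℕ) : ℝ) / (m : ℝ) = (c : ℝ) / ((m / e : ℕ) : ℝ) := by
      rw [show (m : ℝ) = (e : ℝ) * ((m / e : ℕ) : ℝ) by exact_mod_cast hek.symm]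
      push_cast
      rw [mul_div_mul_left _ _ (by exact_mod_cast he0)]
    rw [this]

lemma zmod_sum (m : ℕ) [NeZero m] (F : ℕ → ℝ) :
    ∑ a : ZMod m, F (a.val) = ∑ a ∈ range m, F a := by
  refine Finset.sum_nbij' (fun a => a.val) (fun a => (a : ZMod m)) ?_ ?_ ?_ ?_ ?_
  · intro a _; exact Finset.mem_range.2 (ZMod.val_lt a)
  · intro a _; exact Finset.mem_univ _
  · intro a _; exact ZMod.natCast_rightInverse a
  · intro a ha; exact ZMod.val_cast_of_lt (Finset.mem_range.1 ha)
  · intro a _; rfl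


/-- For every integer `m ≥ 2`,
`∑_{a ∈ ℤ/mℤ} ν_a {a/m}(1 - {a/m}) = 1/6`, where `{a/m}` is computed with the integer
representative of `a` in `{0, 1, …, m-1}`; in particular the sum does not depend on `m`. -/
theorem stmt_8 (m : ℕ) [NeZero m] (hm : 2 ≤ m) :
    ∑ a : ZMod m, nuPMF m a * ((a.val : ℝ) / m * (1 - (a.val : ℝ) / m)) = 1 / 6 := by
  have hm0 : m ≠ 0 := NeZero.ne m
  have hmR : (m : ℝ) ≠ 0 := Nat.cast_ne_zero.2 hm0
  set P : ℝ := ∏ p ∈ m.primeFactors, (1 - 1 / (p : ℝ) ^ 2) with hPdef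
  have hPpos : 0 < P := by
    refine Finset.prod_pos fun p hp => ?_
    have h2 : 2 ≤ p := (Nat.prime_of_mem_primeFactors hp).two_le
    have : (1 : ℝ) < (p : ℝ) ^ 2 := by
      have : (2 : ℝ) ≤ (p : ℝ) := by exact_mod_cast h2
      nlinarith
    have := div_lt_one (by linarith : (0:ℝ) < (p:ℝ)^2) |>.2 this
    linarith
  have hmP : (m : ℝ) * P ≠ 0 := mul_ne_zero hmR hPpos.ne'
  -- rewrite each term as a quotient and pull the division out
  have hstep : ∀ a : ZMod m, nuPMF m a * ((a.val : ℝ) / m * (1 - (a.val : ℝ) / m))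
      = ((∏ p ∈ (Nat.gcd a.val m).primeFactors, (1 - 1 / (p : ℝ)))
          * ((a.val : ℝ) / m * (1 - (a.val : ℝ) / m))) / ((m : ℝ) * P) := by
    intro a
    rw [nuPMF, div_mul_eq_mul_div]
  simp_rw [hstep, ← Finset.sum_div]
  rw [zmod_sum m (fun n => (∏ p ∈ (Nat.gcd n m).primeFactors, (1 - 1 / (p : ℝ)))
      * ((n : ℝ) / m * (1 - (n : ℝ) / m)))]
  have key : ∑ a ∈ range m, (∏ p ∈ (Nat.gcd a m).primeFactors, (1 - 1 / (p : ℝ)))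
      * ((a : ℝ) / m * (1 - (a : ℝ) / m)) = (m : ℝ) * P / 6 := by
    have h1 : ∀ a ∈ range m, (∏ p ∈ (Nat.gcd a m).primeFactors, (1 - 1 / (p : ℝ)))
        * ((a : ℝ) / m * (1 - (a : ℝ) / m))
        = ∑ d ∈ m.divisors, (if d ∣ a then ((μ d : ℝ) / (d : ℝ)) * ((a : ℝ) / m * (1 - (a : ℝ) / m)) else 0) := by
      intro a _
      have hg : Nat.gcd a m ≠ 0 := Nat.gcd_ne_zero_right hm0
      have := moeb_sum 1 hg
      simp only [pow_one] at this
      rw [this, gcd_divisors a m hm0, Finset.sum_filter, Finset.sum_mul]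
      refine Finset.sum_congr rfl fun d _ => ?_
      split <;> simp
    rw [Finset.sum_congr rfl h1, Finset.sum_comm]
    have h2 : ∀ d ∈ m.divisors,
        ∑ a ∈ range m, (if d ∣ a then ((μ d : ℝ) / (d : ℝ)) * ((a : ℝ) / m * (1 - (a : ℝ) / m)) else 0)
        = ((μ d : ℝ) / (d : ℝ)) * ((((m / d : ℕ) : ℝ)) ^ 2 - 1) / (6 * ((m / d : ℕ) : ℝ)) := by
      intro d hd
      obtain ⟨hdvd, -⟩ := Nat.mem_divisors.1 hd
      have hd0 : d ≠ 0 := (Nat.pos_of_mem_divisors hd).ne'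
      have hk0 : m / d ≠ 0 := Nat.div_ne_zero_iff.2 ⟨hd0, Nat.le_of_dvd (Nat.pos_of_ne_zero hm0) hdvd⟩
      rw [← Finset.sum_filter, ← Finset.mul_sum, innerSumAux m d hm0 hdvd hd0,
          quad_sum (m / d) hk0, mul_div_assoc]
    rw [Finset.sum_congr rfl h2]
    -- now evaluate the divisor sum
    have h3 : ∀ d ∈ m.divisors,
        ((μ d : ℝ) / (d : ℝ)) * ((((m / d : ℕ) : ℝ)) ^ 2 - 1) / (6 * ((m / d : ℕ) : ℝ))
        = (m : ℝ) / 6 * ((μ d : ℝ) / (d : ℝ) ^ 2) - (1 / (6 * m)) * (μ d : ℝ) := by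
      intro d hd
      obtain ⟨hdvd, -⟩ := Nat.mem_divisors.1 hd
      have hd0 : d ≠ 0 := (Nat.pos_of_mem_divisors hd).ne'
      have hdR : (d : ℝ) ≠ 0 := Nat.cast_ne_zero.2 hd0
      have hkval : ((m / d : ℕ) : ℝ) = (m : ℝ) / (d : ℝ) := by
        rw [eq_div_iff hdR]
        exact_mod_cast (Nat.div_mul_cancel hdvd)
      rw [hkval]
      field_simp
    rw [Finset.sum_congr rfl h3, Finset.sum_sub_distrib, ← Finset.mul_sum, ← Finset.mul_sum]
    have h4 : ∑ d ∈ m.divisors, (μ d : ℝ) / (d : ℝ) ^ 2 = P := (moeb_sum 2 hm0).symm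
    rw [h4, moebius_sum_zero hm, mul_zero, sub_zero]
    ring
  rw [key]
  field_simp
end

section
/- Let λ be Lebesgue measure on (0,1). For every k ≥ 0, every set A in the σ-algebra A_1^k generated by the continued fraction digits a_1, …, a_k, and every set B in the σ-algebra A_{k+1}^∞ generated by the digits a_i, i ≥ k+1, one has (1/2) λ(A) λ(B) ≤ λ(A ∩ B) ≤ 2 λ(A) λ(B). Moreover, for any A, A' ∈ A_1^k and B ∈ A_{k+1}^∞ with λ(A), λ(A'), λ(B) > 0, the ratio λ(B | A) / λ(B | A') lies in [1/2, 2], where λ(B | A) = λ(A ∩ B)/λ(A). -/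
open MeasureTheory
open scoped ENNReal

/-- The Gauss map `T x = {1/x}`. -/
noncomputable def gaussMap (x : ℝ) : ℝ := Int.fract x⁻¹

/-- The `n`-th continued fraction partial quotient `a_n(α) = ⌊1/(T^{n-1} α)⌋` (for `n ≥ 1`). -/
noncomputable def cfA (n : ℕ) (α : ℝ) : ℕ := (⌊(gaussMap^[n - 1] α)⁻¹⌋).toNat

/-- The σ-algebra `𝒜_k^ℓ` generated by the digits `a_i`, `k ≤ i ≤ ℓ`. -/
noncomputable def sigmaCF (k l : ℕ) : MeasurableSpace ℝ :=
  ⨆ i ∈ Set.Icc k l, MeasurableSpace.comap (cfA i) ⊤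

/-- The σ-algebra `𝒜_k^∞` generated by the digits `a_i`, `i ≥ k`. -/
noncomputable def sigmaCFtail (k : ℕ) : MeasurableSpace ℝ :=
  ⨆ i ∈ Set.Ici k, MeasurableSpace.comap (cfA i) ⊤

/-- Lebesgue measure on `(0,1)`. -/
noncomputable def lam01 : Measure ℝ := volume.restrict (Set.Ioo (0 : ℝ) 1)

def Irr01 : Set ℝ := {x | Irrational x ∧ x ∈ Set.Ioo 0 1}

lemma irr01_def {x : ℝ} (h : x ∈ Irr01) : Irrational x ∧ 0 < x ∧ x < 1 :=
  ⟨h.1, h.2.1, h.2.2⟩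

lemma Irrational.fract {x : ℝ} (h : Irrational x) : Irrational (Int.fract x) :=
  Irrational.sub_intCast h _

lemma Irrational.ne_zero' {x : ℝ} (h : Irrational x) : x ≠ 0 := by
  intro h0; exact (h0 ▸ h) (by exact ⟨0, by simp⟩)

lemma gaussMap_mem {x : ℝ} (h : x ∈ Irr01) : gaussMap x ∈ Irr01 := by
  obtain ⟨hirr, hx0, hx1⟩ := irr01_def h
  have hfr : Irrational (Int.fract x⁻¹) := hirr.inv.fract
  refine ⟨hfr, ?_, Int.fract_lt_one _⟩
  rcases lt_or_eq_of_le (Int.fract_nonneg x⁻¹) with h' | h'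
  · exact h'
  · exact absurd h'.symm hfr.ne_zero'

lemma one_lt_inv01 {x : ℝ} (hx0 : 0 < x) (hx1 : x < 1) : 1 < x⁻¹ :=
  (one_lt_inv₀ hx0).2 hx1

lemma cfA_one_ge {x : ℝ} (h : x ∈ Irr01) : 1 ≤ cfA 1 x := by
  obtain ⟨hirr, hx0, hx1⟩ := irr01_def h
  have h1 : (1:ℤ) ≤ ⌊x⁻¹⌋ := by
    rw [Int.le_floor]; exact_mod_cast (one_lt_inv01 hx0 hx1).le
  simpa [cfA] using Int.toNat_le_toNat h1

lemma cfA_one_add_gauss {x : ℝ} (h : x ∈ Irr01) :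
    (cfA 1 x : ℝ) + gaussMap x = x⁻¹ := by
  obtain ⟨hirr, hx0, hx1⟩ := irr01_def h
  have h1 : (0:ℤ) ≤ ⌊x⁻¹⌋ :=
    le_trans zero_le_one (by rw [Int.le_floor]; exact_mod_cast (one_lt_inv01 hx0 hx1).le)
  have hc : ((⌊x⁻¹⌋.toNat : ℕ) : ℝ) = ((⌊x⁻¹⌋ : ℤ) : ℝ) := by exact_mod_cast Int.toNat_of_nonneg h1
  simp only [cfA, gaussMap, Function.iterate_zero, id, Nat.sub_self]
  rw [hc, Int.fract]
  ring

/-- the basic bijection step -/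
lemma step_forward {a : ℕ} (ha : 1 ≤ a) {t : ℝ} (ht : t ∈ Irr01) :
    ((a : ℝ) + t)⁻¹ ∈ Irr01 ∧ cfA 1 ((a:ℝ)+t)⁻¹ = a ∧ gaussMap ((a:ℝ)+t)⁻¹ = t := by
  obtain ⟨hirr, ht0, ht1⟩ := irr01_def ht
  have hat : (1:ℝ) < (a:ℝ) + t := by
    have : (1:ℝ) ≤ (a:ℝ) := by exact_mod_cast ha
    linarith
  have hat0 : (0:ℝ) < (a:ℝ) + t := lt_trans one_pos hat
  have hirr' : Irrational ((a:ℝ) + t) := by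
    have := Irrational.natCast_add hirr a; simpa using this
  have hmem : ((a : ℝ) + t)⁻¹ ∈ Irr01 := by
    refine ⟨hirr'.inv, by positivity, ?_⟩
    rw [inv_lt_one_iff₀]; right; exact hat
  have hinv : (((a : ℝ) + t)⁻¹)⁻¹ = (a:ℝ) + t := inv_inv _
  have hfl : ⌊(a:ℝ) + t⌋ = (a : ℤ) := by
    rw [add_comm]
    rw [Int.floor_add_natCast]
    simp [Int.floor_eq_zero_iff, Set.mem_Ico, ht0.le, ht1]
  refine ⟨hmem, ?_, ?_⟩
  · simp [cfA, hinv, hfl]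
  · simp [gaussMap, hinv, Int.fract, hfl]

lemma step_backward {x : ℝ} (h : x ∈ Irr01) :
    gaussMap x ∈ Irr01 ∧ x = ((cfA 1 x : ℝ) + gaussMap x)⁻¹ ∧ 1 ≤ cfA 1 x := by
  refine ⟨gaussMap_mem h, ?_, cfA_one_ge h⟩
  rw [cfA_one_add_gauss h, inv_inv]

lemma cfA_shift (n : ℕ) (x : ℝ) : cfA (n + 2) x = cfA (n + 1) (gaussMap x) := by
  simp [cfA, Function.iterate_succ_apply]

/-! ### Cylinders and Möbius data -/

/-- `(p, p', q, q')` such that the inverse branch is `t ↦ (p' t + p)/(q' t + q)`. -/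
def cfM : List ℕ → (ℕ × ℕ) × (ℕ × ℕ)
  | [] => ((0, 1), (1, 0))
  | a :: l =>
    let m := cfM l
    ((m.2.1, m.2.2), (a * m.2.1 + m.1.1, a * m.2.2 + m.1.2))

def cP (l : List ℕ) : ℕ := (cfM l).1.1
def cP' (l : List ℕ) : ℕ := (cfM l).1.2
def cQ (l : List ℕ) : ℕ := (cfM l).2.1
def cQ' (l : List ℕ) : ℕ := (cfM l).2.2

@[simp] lemma cP_nil : cP [] = 0 := rfl
@[simp] lemma cP'_nil : cP' [] = 1 := rfl
@[simp] lemma cQ_nil : cQ [] = 1 := rfl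
@[simp] lemma cQ'_nil : cQ' [] = 0 := rfl
lemma cP_cons (a : ℕ) (l : List ℕ) : cP (a :: l) = cQ l := rfl
lemma cP'_cons (a : ℕ) (l : List ℕ) : cP' (a :: l) = cQ' l := rfl
lemma cQ_cons (a : ℕ) (l : List ℕ) : cQ (a :: l) = a * cQ l + cP l := rfl
lemma cQ'_cons (a : ℕ) (l : List ℕ) : cQ' (a :: l) = a * cQ' l + cP' l := rfl

def GoodL (l : List ℕ) : Prop := ∀ a ∈ l, 1 ≤ a

lemma cfM_invariant {l : List ℕ} (hl : GoodL l) :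
    (1 ≤ cQ l ∧ cQ' l ≤ cQ l ∧
      ((cP l : ℤ) * cQ' l - cP' l * cQ l = 1 ∨ (cP l : ℤ) * cQ' l - cP' l * cQ l = -1)) ∧
    (l ≠ [] → cP' l ≤ cP l ∧ 1 ≤ cP l) := by
  induction l with
  | nil => simp
  | cons a l ih =>
    have ha : 1 ≤ a := hl a List.mem_cons_self
    have hl' : GoodL l := fun b hb => hl b (List.mem_cons_of_mem a hb)
    obtain ⟨⟨hq1, hq'q, hdet⟩, hne⟩ := ih hl'
    rcases eq_or_ne l [] with rfl | hlne
    · refine ⟨⟨?_, ?_, ?_⟩, fun _ => ⟨?_, ?_⟩⟩ <;>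
        simp [cQ_cons, cQ'_cons, cP_cons, cP'_cons, ha] <;> omega
    · obtain ⟨hp'p, hp1⟩ := hne hlne
      refine ⟨⟨?_, ?_, ?_⟩, fun _ => ⟨?_, ?_⟩⟩
      · simp only [cQ_cons]; nlinarith
      · simp only [cQ_cons, cQ'_cons]; nlinarith
      · simp only [cQ_cons, cQ'_cons, cP_cons, cP'_cons]
        push_cast
        rcases hdet with h | h
        · right; push_cast at h; nlinarith
        · left; push_cast at h; nlinarith
      · simp only [cP_cons, cP'_cons]; exact hq'q
      · simp only [cP_cons]; exact hq1

/-- the inverse branch of `T^k` associated with digits `l` -/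
noncomputable def hFun (l : List ℕ) (t : ℝ) : ℝ :=
  ((cP' l : ℝ) * t + cP l) / ((cQ' l : ℝ) * t + cQ l)

lemma denom_pos {l : List ℕ} (hl : GoodL l) {t : ℝ} (ht : 0 ≤ t) :
    0 < (cQ' l : ℝ) * t + cQ l := by
  have h1 : (1:ℝ) ≤ (cQ l : ℝ) := by exact_mod_cast (cfM_invariant hl).1.1
  have h2 : (0:ℝ) ≤ (cQ' l : ℝ) * t := by positivity
  linarith

@[simp] lemma hFun_nil (t : ℝ) : hFun [] t = t := by simp [hFun]

lemma hFun_cons {a : ℕ} {l : List ℕ} (hl : GoodL (a :: l)) {t : ℝ} (ht : 0 ≤ t) :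
    hFun (a :: l) t = ((a : ℝ) + hFun l t)⁻¹ := by
  have hl' : GoodL l := fun b hb => hl b (List.mem_cons_of_mem a hb)
  have hd : 0 < (cQ' l : ℝ) * t + cQ l := denom_pos hl' ht
  have hd2 : 0 < (cQ' (a::l) : ℝ) * t + cQ (a::l) := denom_pos hl ht
  simp only [hFun, cP_cons, cP'_cons, cQ_cons, cQ'_cons]
  have key : (a:ℝ) + ((cP' l : ℝ) * t + cP l) / ((cQ' l : ℝ) * t + cQ l)
      = ((cQ' (a::l) : ℝ) * t + cQ (a::l)) / ((cQ' l : ℝ) * t + cQ l) := by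
    rw [cQ_cons, cQ'_cons]
    rw [eq_div_iff hd.ne', add_mul, div_mul_cancel₀ _ hd.ne']
    push_cast
    ring
  rw [cQ_cons, cQ'_cons] at key
  rw [key, inv_div]

/-- the cylinder set -/
def cyl (l : List ℕ) : Set ℝ :=
  {x ∈ Irr01 | ∀ i, ∀ h : i < l.length, cfA (i+1) x = l.get ⟨i, h⟩}

lemma cyl_subset_Irr01 (l : List ℕ) : cyl l ⊆ Irr01 := fun _ h => h.1

lemma forward {l : List ℕ} (hl : GoodL l) {t : ℝ} (ht : t ∈ Irr01) :
    hFun l t ∈ cyl l ∧ gaussMap^[l.length] (hFun l t) = t := by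
  induction l with
  | nil =>
    refine ⟨⟨by simpa using ht, ?_⟩, by simp⟩
    intro i h; exact absurd h (by simp)
  | cons a l ih =>
    have ha : 1 ≤ a := hl a List.mem_cons_self
    have hl' : GoodL l := fun b hb => hl b (List.mem_cons_of_mem a hb)
    obtain ⟨hcyl, hiter⟩ := ih hl'
    have htmem : hFun l t ∈ Irr01 := (cyl_subset_Irr01 l) hcyl
    obtain ⟨hmem, hcf, hg⟩ := step_forward ha htmem
    have hx : hFun (a :: l) t = ((a : ℝ) + hFun l t)⁻¹ := hFun_cons hl ht.2.1.le
    rw [hx]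
    refine ⟨⟨hmem, ?_⟩, ?_⟩
    · intro i h
      match i with
      | 0 => simpa using hcf
      | (j+1) =>
        rw [cfA_shift, hg]
        have hj : j < l.length := by simpa using h
        simpa using hcyl.2 j hj
    · rw [List.length_cons, Function.iterate_succ_apply, hg, hiter]

lemma backward {l : List ℕ} (hl : GoodL l) {x : ℝ} (hx : x ∈ cyl l) :
    gaussMap^[l.length] x ∈ Irr01 ∧ x = hFun l (gaussMap^[l.length] x) := by
  induction l generalizing x with
  | nil => exact ⟨by simpa using hx.1, by simp⟩
  | cons a l ih =>
    have ha : 1 ≤ a := hl a List.mem_cons_self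
    have hl' : GoodL l := fun b hb => hl b (List.mem_cons_of_mem a hb)
    have hxI : x ∈ Irr01 := hx.1
    obtain ⟨hgI, hxeq, _⟩ := step_backward hxI
    have hcf1 : cfA 1 x = a := by simpa using hx.2 0 (by simp)
    have hgcyl : gaussMap x ∈ cyl l := by
      refine ⟨hgI, ?_⟩
      intro i h
      rw [← cfA_shift]
      have : i + 1 < (a :: l).length := by simpa using Nat.succ_lt_succ h
      simpa using hx.2 (i+1) this
    obtain ⟨hI2, heq2⟩ := ih hl' hgcyl
    have hit : gaussMap^[(a :: l).length] x = gaussMap^[l.length] (gaussMap x) := by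
      rw [List.length_cons, Function.iterate_succ_apply]
    refine ⟨by rw [hit]; exact hI2, ?_⟩
    rw [hit, hFun_cons hl hI2.2.1.le]
    rw [← heq2, ← hcf1]
    exact hxeq

lemma cyl_inter_preimage {l : List ℕ} (hl : GoodL l) (E : Set ℝ) :
    cyl l ∩ (gaussMap^[l.length]) ⁻¹' E = hFun l '' (E ∩ Irr01) := by
  ext x
  constructor
  · rintro ⟨hx, hE⟩
    obtain ⟨hI, heq⟩ := backward hl hx
    exact ⟨_, ⟨hE, hI⟩, heq.symm⟩
  · rintro ⟨t, ⟨htE, htI⟩, rfl⟩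
    obtain ⟨hc, hiter⟩ := forward hl htI
    exact ⟨hc, by simpa [Set.mem_preimage, hiter] using htE⟩

noncomputable def hDer (l : List ℕ) (t : ℝ) : ℝ :=
  ((cP' l : ℝ) * cQ l - cP l * cQ' l) / (((cQ' l : ℝ) * t + cQ l)^2)

lemma hFun_hasDerivAt {l : List ℕ} (hl : GoodL l) {t : ℝ} (ht : 0 ≤ t) :
    HasDerivAt (hFun l) (hDer l t) t := by
  have hd : ((cQ' l : ℝ) * t + cQ l) ≠ 0 := (denom_pos hl ht).ne'
  have h1 : HasDerivAt (fun t : ℝ => (cP' l : ℝ) * t + cP l) (cP' l) t := by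
    simpa using ((hasDerivAt_id t).const_mul (cP' l : ℝ)).add_const (cP l : ℝ)
  have h2 : HasDerivAt (fun t : ℝ => (cQ' l : ℝ) * t + cQ l) (cQ' l) t := by
    simpa using ((hasDerivAt_id t).const_mul (cQ' l : ℝ)).add_const (cQ l : ℝ)
  have := h1.div h2 hd
  refine this.congr_deriv ?_
  unfold hDer
  field_simp
  ring

lemma abs_hDer {l : List ℕ} (hl : GoodL l) {t : ℝ} (ht : 0 ≤ t) :
    |hDer l t| = (((cQ' l : ℝ) * t + cQ l)^2)⁻¹ := by
  have hd : (0:ℝ) < ((cQ' l : ℝ) * t + cQ l) := denom_pos hl ht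
  have hdet := (cfM_invariant hl).1.2.2
  have : |(cP' l : ℝ) * cQ l - cP l * cQ' l| = 1 := by
    rcases hdet with h | h
    · have : ((cP' l : ℝ) * cQ l - cP l * cQ' l) = -1 := by
        have := congrArg (fun z : ℤ => (z : ℝ)) h; push_cast at this; linarith
      rw [this]; simp
    · have : ((cP' l : ℝ) * cQ l - cP l * cQ' l) = 1 := by
        have := congrArg (fun z : ℤ => (z : ℝ)) h; push_cast at this; linarith
      rw [this]; simp
  rw [hDer, abs_div, this, abs_of_pos (by positivity)]
  simp [one_div]

lemma hFun_injOn {l : List ℕ} (hl : GoodL l) : Set.InjOn (hFun l) (Set.Ici 0) := by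
  intro s hs t ht h
  have hds : ((cQ' l : ℝ) * s + cQ l) ≠ 0 := (denom_pos hl hs).ne'
  have hdt : ((cQ' l : ℝ) * t + cQ l) ≠ 0 := (denom_pos hl ht).ne'
  have hdet : ((cP' l : ℝ) * cQ l - cP l * cQ' l) ≠ 0 := by
    rcases (cfM_invariant hl).1.2.2 with h' | h' <;>
      (have h'' := congrArg (fun z : ℤ => (z : ℝ)) h'; push_cast at h''; intro h0; linarith)
  rw [hFun, hFun, div_eq_div_iff hds hdt] at h
  have : ((cP' l : ℝ) * cQ l - cP l * cQ' l) * s = ((cP' l : ℝ) * cQ l - cP l * cQ' l) * t := by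
    nlinarith [h]
  exact mul_left_cancel₀ hdet this

noncomputable def gDen (l : List ℕ) (t : ℝ) : ℝ := (((cQ' l : ℝ) * t + cQ l)^2)⁻¹

lemma gDen_cont {l : List ℕ} (hl : GoodL l) : ContinuousOn (gDen l) (Set.Ici 0) := by
  apply ContinuousOn.inv₀
  · fun_prop
  · intro t ht; exact (pow_ne_zero 2 (denom_pos hl ht).ne')

lemma vol_image {l : List ℕ} (hl : GoodL l) {s : Set ℝ} (hs : MeasurableSet s)
    (hsub : s ⊆ Set.Ici 0) :
    volume (hFun l '' s) = ∫⁻ t in s, ENNReal.ofReal (gDen l t) := by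
  have hf' : ∀ x ∈ s, HasFDerivWithinAt (hFun l)
      ((1 : ℝ →L[ℝ] ℝ).smulRight (hDer l x)) s x := fun x hx =>
    ((hFun_hasDerivAt hl (hsub hx)).hasDerivWithinAt).hasFDerivWithinAt
  have hinj : Set.InjOn (hFun l) s := (hFun_injOn hl).mono hsub
  have h := lintegral_image_eq_lintegral_abs_det_fderiv_mul volume hs hf' hinj (fun _ => 1)
  simp only [ContinuousLinearMap.det_smulRight, ContinuousLinearMap.one_apply, one_mul, mul_one] at h
  rw [setLIntegral_one] at h
  rw [h]
  apply setLIntegral_congr_fun hs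
  intro t ht
  dsimp only
  rw [abs_hDer hl (hsub ht)]
  rfl

lemma measurable_gaussMap : Measurable gaussMap := by
  unfold gaussMap
  exact Measurable.comp measurable_fract measurable_inv

lemma measurable_cfA (n : ℕ) : Measurable (cfA n) := by
  unfold cfA
  exact (measurable_from_top (f := Int.toNat)).comp
    (Int.measurable_floor.comp (Measurable.inv (measurable_gaussMap.iterate (n-1))))

lemma measurableSet_Irr01 : MeasurableSet Irr01 := by
  have : Irr01 = {x : ℝ | Irrational x} ∩ Set.Ioo 0 1 := rfl
  rw [this]
  refine MeasurableSet.inter ?_ measurableSet_Ioo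
  exact ((Set.countable_range _).measurableSet).compl

lemma Irr01_ae_eq : Irr01 =ᵐ[volume] Set.Ioo (0:ℝ) 1 := by
  rw [Filter.eventuallyEq_set]
  have h : ∀ᵐ x : ℝ, x ∉ Set.range ((↑) : ℚ → ℝ) := by
    rw [MeasureTheory.ae_iff]
    simpa only [not_not, Set.setOf_mem_eq] using (Set.countable_range ((↑) : ℚ → ℝ)).measure_zero volume
  filter_upwards [h] with x hx
  constructor
  · exact fun h => h.2
  · exact fun h => ⟨fun hq => hx ⟨hq.choose, hq.choose_spec⟩, h⟩

lemma lint_gDen {l : List ℕ} (hl : GoodL l) :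
    ∫⁻ t in Set.Ioo (0:ℝ) 1, ENNReal.ofReal (gDen l t)
      = ENNReal.ofReal (1 / ((cQ l : ℝ) * ((cQ l : ℝ) + cQ' l))) := by
  have hint : IntegrableOn (gDen l) (Set.Ioo 0 1) := by
    apply ((gDen_cont hl).mono (by intro x hx; exact hx.1 : Set.Icc (0:ℝ) 1 ⊆ Set.Ici 0)).integrableOn_Icc.mono_set
    exact Set.Ioo_subset_Icc_self
  rw [← MeasureTheory.ofReal_integral_eq_lintegral_ofReal hint]
  swap
  · filter_upwards with t
    unfold gDen; positivity
  congr 1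
  have h1 : ∫ t in Set.Ioo (0:ℝ) 1, gDen l t = ∫ t in (0:ℝ)..1, gDen l t := by
    rw [intervalIntegral.integral_of_le zero_le_one, ← MeasureTheory.integral_Ioc_eq_integral_Ioo]
  rw [h1]
  have hq1 : (1:ℝ) ≤ (cQ l : ℝ) := by exact_mod_cast (cfM_invariant hl).1.1
  have hder : ∀ t ∈ Set.uIcc (0:ℝ) 1,
      HasDerivAt (fun t : ℝ => t / ((cQ l : ℝ) * ((cQ' l : ℝ) * t + cQ l))) (gDen l t) t := by
    intro t ht
    rw [Set.uIcc_of_le zero_le_one] at ht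
    have hd : ((cQ' l : ℝ) * t + cQ l) ≠ 0 := (denom_pos hl ht.1).ne'
    have h1 : HasDerivAt (fun t : ℝ => t) 1 t := hasDerivAt_id t
    have h2 : HasDerivAt (fun t : ℝ => (cQ l : ℝ) * ((cQ' l : ℝ) * t + cQ l))
        ((cQ l : ℝ) * (cQ' l : ℝ)) t := by
      simpa using (((hasDerivAt_id t).const_mul (cQ' l : ℝ)).add_const (cQ l : ℝ)).const_mul (cQ l : ℝ)
    have := h1.div h2 (by positivity)
    refine this.congr_deriv ?_
    unfold gDen
    field_simp
    ring
  have hii : IntervalIntegrable (gDen l) volume 0 1 :=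
    ContinuousOn.intervalIntegrable ((gDen_cont hl).mono (by
      rw [Set.uIcc_of_le zero_le_one]; intro x hx; exact hx.1))
  rw [intervalIntegral.integral_eq_sub_of_hasDerivAt hder hii]
  have hd1 : ((cQ l : ℝ) * ((cQ' l : ℝ) * 1 + cQ l)) ≠ 0 := by
    have := denom_pos hl (zero_le_one (α := ℝ)); positivity
  field_simp
  all_goals try ring
  all_goals tauto

noncomputable def mE (l : List ℕ) (E : Set ℝ) : ℝ≥0∞ :=
  ∫⁻ t in E ∩ Irr01, ENNReal.ofReal (gDen l t)

noncomputable def cVol (l : List ℕ) : ℝ≥0∞ :=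
  ENNReal.ofReal (1 / ((cQ l : ℝ) * ((cQ l : ℝ) + cQ' l)))

lemma Irr01_subset_Ioo : Irr01 ⊆ Set.Ioo 0 1 := fun _ h => h.2

lemma vol_cyl_inter {l : List ℕ} (hl : GoodL l) {E : Set ℝ} (hE : MeasurableSet E) :
    volume (cyl l ∩ (gaussMap^[l.length]) ⁻¹' E) = mE l E := by
  rw [cyl_inter_preimage hl]
  exact vol_image hl (hE.inter measurableSet_Irr01)
    (fun t ht => (Irr01_subset_Ioo ht.2).1.le)

lemma mE_univ {l : List ℕ} (hl : GoodL l) : mE l Set.univ = cVol l := by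
  unfold mE cVol
  rw [Set.univ_inter, setLIntegral_congr Irr01_ae_eq, lint_gDen hl]

lemma vol_cyl {l : List ℕ} (hl : GoodL l) : volume (cyl l) = cVol l := by
  have h := vol_cyl_inter hl MeasurableSet.univ
  simpa [mE_univ hl] using h

lemma measurable_gDen (l : List ℕ) : Measurable (gDen l) := by
  unfold gDen
  fun_prop

lemma keyn (θ σ t : ℝ) (h1 : 0 ≤ θ) (h2 : θ ≤ 1) (h3 : 0 ≤ σ) (h4 : σ ≤ 1)
    (h5 : 0 ≤ t) (h6 : t ≤ 1) :
    (1+θ)*(1+σ*t)^2 ≤ 2*((1+σ)*(1+θ*t)^2) := by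
  nlinarith [mul_nonneg h1 h5, mul_nonneg h3 h5, sq_nonneg (θ*t - σ*t), sq_nonneg (θ*t+σ*t),
    mul_nonneg (mul_nonneg h1 h5) (mul_nonneg h3 h5), sq_nonneg (1 - θ*t), sq_nonneg (1-σ*t),
    mul_nonneg (mul_nonneg h3 h5) (sub_nonneg.2 h6), mul_nonneg h1 (sub_nonneg.2 h6),
    mul_nonneg (mul_nonneg h1 h1) (mul_nonneg h5 h5)]

lemma key_real (a b c d t : ℝ) (ha : 1 ≤ a) (hb0 : 0 ≤ b) (hb : b ≤ a)
    (hc : 1 ≤ c) (hd0 : 0 ≤ d) (hd : d ≤ c) (ht0 : 0 ≤ t) (ht1 : t ≤ 1) :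
    a*(a+b)*(d*t+c)^2 ≤ 2*(c*(c+d)*(b*t+a)^2) := by
  have ha0 : (0:ℝ) < a := lt_of_lt_of_le one_pos ha
  have hc0 : (0:ℝ) < c := lt_of_lt_of_le one_pos hc
  have h := keyn (b/a) (d/c) t (by positivity) ((div_le_one ha0).2 hb)
    (by positivity) ((div_le_one hc0).2 hd) ht0 ht1
  have e1 : a*(a+b)*(d*t+c)^2 = (a^2*c^2) * ((1+b/a)*(1+(d/c)*t)^2) := by
    field_simp; ring
  have e2 : 2*(c*(c+d)*(b*t+a)^2) = (a^2*c^2) * (2*((1+d/c)*(1+(b/a)*t)^2)) := by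
    field_simp; ring
  rw [e1, e2]
  exact mul_le_mul_of_nonneg_left h (by positivity)

lemma key_real' (a b c d t : ℝ) (ha : 1 ≤ a) (hb0 : 0 ≤ b) (hb : b ≤ a)
    (hc : 1 ≤ c) (hd0 : 0 ≤ d) (hd : d ≤ c) (ht0 : 0 ≤ t) (ht1 : t ≤ 1) :
    ((b*t+a)^2)⁻¹ * (1 / (c*(c+d))) ≤ 2 * (((d*t+c)^2)⁻¹ * (1 / (a*(a+b)))) := by
  have hkey := key_real a b c d t ha hb0 hb hc hd0 hd ht0 ht1
  have hba : 0 < b*t + a := by nlinarith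
  have hdc : 0 < d*t + c := by nlinarith
  have hCl : 0 < a * (a + b) := by nlinarith
  have hCw : 0 < c * (c + d) := by nlinarith
  have e1 : ((b*t+a)^2)⁻¹ * (1 / (c * (c + d))) = 1 / ((b*t+a)^2 * (c*(c+d))) := by
    field_simp
  have e2 : 2 * (((d*t+c)^2)⁻¹ * (1 / (a * (a + b)))) = 2 / ((d*t+c)^2 * (a*(a+b))) := by
    field_simp
  rw [e1, e2, div_le_div_iff₀ (by positivity) (by positivity)]
  nlinarith [hkey]

lemma key_gDen {l w : List ℕ} (hl : GoodL l) (hw : GoodL w) {t : ℝ}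
    (ht0 : 0 ≤ t) (ht1 : t ≤ 1) :
    gDen l t * (1 / ((cQ w : ℝ) * ((cQ w : ℝ) + cQ' w)))
      ≤ 2 * (gDen w t * (1 / ((cQ l : ℝ) * ((cQ l : ℝ) + cQ' l)))) := by
  have ha : (1:ℝ) ≤ (cQ l : ℝ) := by exact_mod_cast (cfM_invariant hl).1.1
  have hb : (cQ' l : ℝ) ≤ (cQ l : ℝ) := by exact_mod_cast (cfM_invariant hl).1.2.1
  have hc : (1:ℝ) ≤ (cQ w : ℝ) := by exact_mod_cast (cfM_invariant hw).1.1
  have hd : (cQ' w : ℝ) ≤ (cQ w : ℝ) := by exact_mod_cast (cfM_invariant hw).1.2.1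
  have h := key_real' (cQ l : ℝ) (cQ' l : ℝ) (cQ w : ℝ) (cQ' w : ℝ) t
    ha (by positivity) hb hc (by positivity) hd ht0 ht1
  simpa [gDen] using h

lemma key_mE {l w : List ℕ} (hl : GoodL l) (hw : GoodL w) (E : Set ℝ) :
    mE l E * cVol w ≤ 2 * (mE w E * cVol l) := by
  unfold mE cVol
  rw [← lintegral_mul_const _ ((measurable_gDen l).ennreal_ofReal)]
  rw [← lintegral_mul_const _ ((measurable_gDen w).ennreal_ofReal)]
  rw [← lintegral_const_mul _ (((measurable_gDen w).ennreal_ofReal).mul_const _)]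
  apply setLIntegral_mono ((((measurable_gDen w).ennreal_ofReal).mul_const _).const_mul _)
  intro t ht
  have ht' : t ∈ Set.Ioo (0:ℝ) 1 := Irr01_subset_Ioo ht.2
  have h := key_gDen hl hw ht'.1.le ht'.2.le
  calc ENNReal.ofReal (gDen l t) * ENNReal.ofReal (1 / ((cQ w : ℝ) * ((cQ w : ℝ) + cQ' w)))
      = ENNReal.ofReal (gDen l t * (1 / ((cQ w : ℝ) * ((cQ w : ℝ) + cQ' w)))) := by
        rw [ENNReal.ofReal_mul (by unfold gDen; positivity)]
    _ ≤ ENNReal.ofReal (2 * (gDen w t * (1 / ((cQ l : ℝ) * ((cQ l : ℝ) + cQ' l))))) :=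
        ENNReal.ofReal_le_ofReal h
    _ = 2 * (ENNReal.ofReal (gDen w t) * ENNReal.ofReal (1 / ((cQ l : ℝ) * ((cQ l : ℝ) + cQ' l)))) := by
        rw [ENNReal.ofReal_mul (by norm_num), ENNReal.ofReal_mul (by unfold gDen; positivity)]
        norm_num

/-! ### σ-algebra structure -/

noncomputable def digF (k : ℕ) (x : ℝ) : List ℕ := (List.range k).map fun i => cfA (i+1) x

lemma exists_S_of_sigmaCF {k : ℕ} {A : Set ℝ}
    (hA : MeasurableSet[⨆ i ∈ Set.Icc 1 k, MeasurableSpace.comap (cfA i) ⊤] A) :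
    ∃ S : Set (List ℕ), A = digF k ⁻¹' S := by
  have hle : (⨆ i ∈ Set.Icc 1 k, MeasurableSpace.comap (cfA i) ⊤)
      ≤ MeasurableSpace.comap (digF k) ⊤ := by
    refine iSup₂_le fun i hi => ?_
    obtain ⟨hi1, hi2⟩ := hi
    rintro s ⟨u, -, rfl⟩
    refine ⟨{L : List ℕ | L.getD (i-1) 0 ∈ u}, trivial, ?_⟩
    ext x
    simp only [Set.mem_preimage, Set.mem_setOf_eq, digF]
    have hik : i - 1 < k := by omega

    have : ((List.range k).map fun j => cfA (j+1) x).getD (i-1) 0 = cfA i x := by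
      rw [List.getD_eq_getElem?_getD]
      rw [List.getElem?_map, List.getElem?_range hik]
      simp only [Option.map_some, Option.getD_some]
      congr 1
      omega
    rw [this]
  obtain ⟨S, -, rfl⟩ := hle A hA
  exact ⟨S, rfl⟩

lemma exists_E_of_sigmaCFtail {k : ℕ} {B : Set ℝ}
    (hB : MeasurableSet[⨆ i ∈ Set.Ici (k+1), MeasurableSpace.comap (cfA i) ⊤] B) :
    ∃ E : Set ℝ, MeasurableSet E ∧ B = gaussMap^[k] ⁻¹' E := by
  have hle : (⨆ i ∈ Set.Ici (k+1), MeasurableSpace.comap (cfA i) ⊤)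
      ≤ MeasurableSpace.comap (gaussMap^[k]) (by infer_instance) := by
    refine iSup₂_le fun i hi => ?_
    have hi' : k + 1 ≤ i := hi
    have hcomp : cfA i = cfA (i - k) ∘ gaussMap^[k] := by
      funext x
      simp only [Function.comp_apply, cfA]
      rw [← Function.iterate_add_apply]
      have : i - k - 1 + k = i - 1 := by omega
      rw [this]
    rw [hcomp, ← MeasurableSpace.comap_comp]
    exact MeasurableSpace.comap_mono (measurable_iff_comap_le.mp (measurable_cfA (i-k)))
  obtain ⟨E, hE, rfl⟩ := hle B hB
  exact ⟨E, hE, rfl⟩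

lemma iterate_mem_Irr01 {x : ℝ} (h : x ∈ Irr01) (i : ℕ) : gaussMap^[i] x ∈ Irr01 := by
  induction i with
  | zero => simpa using h
  | succ n ih => rw [Function.iterate_succ_apply']; exact gaussMap_mem ih

lemma cfA_succ_eq (i : ℕ) (x : ℝ) : cfA (i+1) x = cfA 1 (gaussMap^[i] x) := by
  simp [cfA]

lemma digF_length (k : ℕ) (x : ℝ) : (digF k x).length = k := by simp [digF]

lemma digF_getElem {k : ℕ} {x : ℝ} {i : ℕ} (h : i < k) :
    (digF k x)[i]'(by simpa [digF_length] using h) = cfA (i+1) x := by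
  simp [digF]

lemma goodL_digF {k : ℕ} {x : ℝ} (hx : x ∈ Irr01) : GoodL (digF k x) := by
  intro a ha
  simp only [digF, List.mem_map, List.mem_range] at ha
  obtain ⟨i, hi, rfl⟩ := ha
  rw [cfA_succ_eq]
  exact cfA_one_ge (iterate_mem_Irr01 hx i)

lemma mem_cyl_digF {k : ℕ} {x : ℝ} (hx : x ∈ Irr01) : x ∈ cyl (digF k x) := by
  refine ⟨hx, fun i h => ?_⟩
  have hik : i < k := by simpa [digF_length] using h
  rw [List.get_eq_getElem, digF_getElem hik]

lemma digF_eq_of_cyl {k : ℕ} {l : List ℕ} {x : ℝ} (hx : x ∈ cyl l) (hk : l.length = k) :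
    digF k x = l := by
  apply List.ext_getElem (by simp [digF_length, hk])
  intro i h1 h2
  have hik : i < k := by simpa [digF_length] using h1
  rw [digF_getElem hik]
  have h3 := hx.2 i h2
  rw [List.get_eq_getElem] at h3
  exact h3

lemma measurableSet_cyl (l : List ℕ) : MeasurableSet (cyl l) := by
  have : cyl l = Irr01 ∩ ⋂ (i : Fin l.length), cfA (i.1+1) ⁻¹' {l.get i} := by
    ext x
    simp only [Set.mem_inter_iff, Set.mem_iInter, Set.mem_preimage, Set.mem_singleton_iff]
    exact ⟨fun h => ⟨h.1, fun i => h.2 i.1 i.2⟩, fun h => ⟨h.1, fun i hi => h.2 ⟨i, hi⟩⟩⟩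
  rw [this]
  exact measurableSet_Irr01.inter (MeasurableSet.iInter fun i =>
    (measurable_cfA _) (MeasurableSet.singleton _))

lemma decomp (k : ℕ) (S : Set (List ℕ)) :
    (digF k ⁻¹' S) ∩ Irr01
      = ⋃ (l : {l : List ℕ // l ∈ S ∧ l.length = k ∧ GoodL l}), cyl l.1 := by
  ext x
  simp only [Set.mem_inter_iff, Set.mem_preimage, Set.mem_iUnion]
  constructor
  · rintro ⟨hS, hI⟩
    exact ⟨⟨digF k x, hS, digF_length k x, goodL_digF hI⟩, mem_cyl_digF hI⟩
  · rintro ⟨⟨l, hlS, hlk, hlG⟩, hx⟩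
    have := digF_eq_of_cyl hx hlk
    exact ⟨this ▸ hlS, hx.1⟩

lemma cyl_length_disjoint {k : ℕ} {l l' : List ℕ} (hk : l.length = k) (hk' : l'.length = k)
    (hne : l ≠ l') : Disjoint (cyl l) (cyl l') := by
  rw [Set.disjoint_left]
  intro x hx hx'
  exact hne ((digF_eq_of_cyl hx hk).symm.trans (digF_eq_of_cyl hx' hk'))

lemma lam01_eq_irr (X : Set ℝ) : lam01 X = volume (X ∩ Irr01) := by
  rw [lam01, Measure.restrict_apply' measurableSet_Ioo]
  exact measure_congr ((Filter.EventuallyEq.refl _ _).inter Irr01_ae_eq.symm)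

lemma lam01_univ : lam01 Set.univ = 1 := by
  rw [lam01, Measure.restrict_apply' measurableSet_Ioo, Set.univ_inter, Real.volume_Ioo]
  norm_num

lemma lam01_ne_top (X : Set ℝ) : lam01 X ≠ ⊤ := by
  refine (lt_of_le_of_lt (measure_mono (Set.subset_univ X)) ?_).ne
  rw [lam01_univ]; exact ENNReal.one_lt_top

/-- decomposition of `lam01 (A ∩ B)` as a sum over cylinders -/
lemma vol_cyl_inter' {l : List ℕ} (hl : GoodL l) {E : Set ℝ} (hE : MeasurableSet E)
    {k : ℕ} (hk : l.length = k) :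
    volume (cyl l ∩ gaussMap^[k] ⁻¹' E) = mE l E := by
  subst hk; exact vol_cyl_inter hl hE

lemma lam01_inter_eq_tsum {k : ℕ} (S : Set (List ℕ)) {E : Set ℝ} (hE : MeasurableSet E) :
    lam01 ((digF k ⁻¹' S) ∩ gaussMap^[k] ⁻¹' E)
      = ∑' l : {l : List ℕ // l ∈ S ∧ l.length = k ∧ GoodL l}, mE l.1 E := by
  rw [lam01_eq_irr]
  have h1 : ((digF k ⁻¹' S) ∩ gaussMap^[k] ⁻¹' E) ∩ Irr01
      = ⋃ (l : {l : List ℕ // l ∈ S ∧ l.length = k ∧ GoodL l}),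
          (cyl l.1 ∩ gaussMap^[k] ⁻¹' E) := by
    have := decomp k S
    rw [Set.inter_right_comm, this, Set.iUnion_inter]
  rw [h1, measure_iUnion ?_ ?_]
  · congr 1
    funext l
    exact vol_cyl_inter' l.2.2.2 hE l.2.2.1
  · intro l l' hne
    refine Set.disjoint_of_subset Set.inter_subset_left Set.inter_subset_left ?_
    refine cyl_length_disjoint l.2.2.1 l'.2.2.1 ?_
    exact fun h => hne (Subtype.ext h)
  · intro l
    exact (measurableSet_cyl l.1).inter ((measurable_gaussMap.iterate k) hE)

lemma lam01_eq_tsum {k : ℕ} (S : Set (List ℕ)) :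
    lam01 (digF k ⁻¹' S)
      = ∑' l : {l : List ℕ // l ∈ S ∧ l.length = k ∧ GoodL l}, cVol l.1 := by
  have h := lam01_inter_eq_tsum (k := k) S MeasurableSet.univ
  simp only [Set.preimage_univ, Set.inter_univ] at h
  rw [h]
  exact tsum_congr fun l => by rw [mE_univ l.2.2.2]

lemma main_ineq {k : ℕ} {A A' B : Set ℝ}
    (hA : MeasurableSet[sigmaCF 1 k] A) (hA' : MeasurableSet[sigmaCF 1 k] A')
    (hB : MeasurableSet[sigmaCFtail (k + 1)] B) :
    lam01 (A ∩ B) * lam01 A' ≤ 2 * (lam01 (A' ∩ B) * lam01 A) := by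
  obtain ⟨S, rfl⟩ := exists_S_of_sigmaCF hA
  obtain ⟨S', rfl⟩ := exists_S_of_sigmaCF hA'
  obtain ⟨E, hE, rfl⟩ := exists_E_of_sigmaCFtail hB
  rw [lam01_inter_eq_tsum S hE, lam01_inter_eq_tsum S' hE, lam01_eq_tsum S, lam01_eq_tsum S']
  set I := {l : List ℕ // l ∈ S ∧ l.length = k ∧ GoodL l}
  set I' := {l : List ℕ // l ∈ S' ∧ l.length = k ∧ GoodL l}
  calc (∑' l : I, mE l.1 E) * (∑' w : I', cVol w.1)
      = ∑' l : I, (mE l.1 E * ∑' w : I', cVol w.1) := ENNReal.tsum_mul_right.symm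
    _ = ∑' l : I, ∑' w : I', mE l.1 E * cVol w.1 :=
        tsum_congr fun l => ENNReal.tsum_mul_left.symm
    _ ≤ ∑' l : I, ∑' w : I', 2 * (mE w.1 E * cVol l.1) :=
        ENNReal.tsum_le_tsum fun l => ENNReal.tsum_le_tsum fun w =>
          key_mE l.2.2.2 w.2.2.2 E
    _ = ∑' l : I, ((2 * cVol l.1) * ∑' w : I', mE w.1 E) := by
        refine tsum_congr fun l => ?_
        rw [← ENNReal.tsum_mul_left]
        exact tsum_congr fun w => by ring
    _ = (∑' l : I, cVol l.1) * (2 * ∑' w : I', mE w.1 E) := by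
        rw [← ENNReal.tsum_mul_right]
        exact tsum_congr fun l => by ring
    _ = 2 * ((∑' w : I', mE w.1 E) * ∑' l : I, cVol l.1) := by ring

lemma enn_cancel {x b : ℝ≥0∞} (hb0 : b ≠ 0) (hbt : b ≠ ⊤) : x * b / b = x := by
  rw [mul_comm, mul_div_assoc, ENNReal.mul_div_cancel hb0 hbt]

/-- For every `k ≥ 0`, every `A, A' ∈ 𝒜_1^k` and `B ∈ 𝒜_{k+1}^∞`:
`(1/2) λ(A) λ(B) ≤ λ(A ∩ B) ≤ 2 λ(A) λ(B)`, and if `λ(A), λ(A'), λ(B) > 0`, then the ratio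
`λ(B ∣ A) / λ(B ∣ A')` lies in `[1/2, 2]`, where `λ(B ∣ A) = λ(A ∩ B)/λ(A)`. -/
theorem stmt_9 (k : ℕ) (A A' B : Set ℝ)
    (hA : MeasurableSet[sigmaCF 1 k] A) (hA' : MeasurableSet[sigmaCF 1 k] A')
    (hB : MeasurableSet[sigmaCFtail (k + 1)] B) :
    ((1 / 2 : ℝ≥0∞) * (lam01 A * lam01 B) ≤ lam01 (A ∩ B) ∧
      lam01 (A ∩ B) ≤ 2 * (lam01 A * lam01 B)) ∧
    (lam01 A ≠ 0 → lam01 A' ≠ 0 → lam01 B ≠ 0 →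
      (1 / 2 : ℝ≥0∞) * (lam01 (A' ∩ B) / lam01 A') ≤ lam01 (A ∩ B) / lam01 A ∧
      lam01 (A ∩ B) / lam01 A ≤ 2 * (lam01 (A' ∩ B) / lam01 A')) := by
  have hUniv : MeasurableSet[sigmaCF 1 k] (Set.univ : Set ℝ) := MeasurableSet.univ
  have htwo : ((1:ℝ≥0∞)/2) * 2 = 1 := by
    rw [one_div, ENNReal.inv_mul_cancel (by norm_num) (by norm_num)]
  constructor
  · constructor
    · have h := main_ineq hUniv hA hB
      rw [Set.univ_inter, lam01_univ, mul_one] at h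
      calc (1/2 : ℝ≥0∞) * (lam01 A * lam01 B) = (1/2 : ℝ≥0∞) * (lam01 B * lam01 A) := by ring
        _ ≤ (1/2 : ℝ≥0∞) * (2 * lam01 (A ∩ B)) := mul_le_mul_right h _
        _ = lam01 (A ∩ B) := by rw [← mul_assoc, htwo, one_mul]
    · have h := main_ineq hA hUniv hB
      rw [Set.univ_inter, lam01_univ, mul_one] at h
      calc lam01 (A ∩ B) ≤ 2 * (lam01 B * lam01 A) := h
        _ = 2 * (lam01 A * lam01 B) := by ring
  · intro ha0 hb0 _
    have hat := lam01_ne_top A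
    have hbt := lam01_ne_top A'
    constructor
    · have h := main_ineq hA' hA hB
      rw [ENNReal.le_div_iff_mul_le (Or.inl ha0) (Or.inl hat)]
      calc (1/2 : ℝ≥0∞) * (lam01 (A' ∩ B) / lam01 A') * lam01 A
          = (1/2 : ℝ≥0∞) * ((lam01 (A' ∩ B) * lam01 A) / lam01 A') := by
            simp only [div_eq_mul_inv]; ring
        _ ≤ (1/2 : ℝ≥0∞) * ((2 * (lam01 (A ∩ B) * lam01 A')) / lam01 A') :=
            mul_le_mul_right (ENNReal.div_le_div_right h _) _
        _ = (1/2 : ℝ≥0∞) * (2 * (lam01 (A ∩ B) * lam01 A' / lam01 A')) := by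
            simp only [div_eq_mul_inv]; ring
        _ = lam01 (A ∩ B) := by
            rw [enn_cancel hb0 hbt, ← mul_assoc, htwo, one_mul]
    · have h := main_ineq hA hA' hB
      rw [ENNReal.div_le_iff ha0 hat]
      calc lam01 (A ∩ B) = lam01 (A ∩ B) * lam01 A' / lam01 A' :=
            (enn_cancel hb0 hbt).symm
        _ ≤ (2 * (lam01 (A' ∩ B) * lam01 A)) / lam01 A' := ENNReal.div_le_div_right h _
        _ = 2 * (lam01 (A' ∩ B) / lam01 A') * lam01 A := by
            simp only [div_eq_mul_inv]; ring
end
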